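/- arXiv:2512.00372 — 4 statements merged into one kernel-verified Lean document; each statement's English description precedes it below -/
import Mathlib

section
/- For each H ∈ K°_n there exists T ∈ Sym(I^n) such that T(H) ⊆ [0,1]^n. -/
open Set Function

noncomputable section

abbrev E (n : ℕ) := EuclideanSpace ℝ (Fin n)

/-- `I^d × {0}^{n-d}` inside `ℝ^n`. -/
def IcubeD (n d : ℕ) : Set (E n) :=
  {x | (∀ i : Fin n, (i : ℕ) < d → x i ∈ Icc (-1 : ℝ) 1) ∧
       ∀ i : Fin n, d ≤ (i : ℕ) → x i = 0}

/-- The cube `I^n = [-1,1]^n`. -/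
def Icube (n : ℕ) : Set (E n) := IcubeD n n

/-- `H^d_{ij}(a,b) = {x ∈ I^d × {0}^{n-d} : a·x_i ≥ b·x_j}`. -/
def HsetD (n d : ℕ) (i j : Fin n) (a b : ℝ) : Set (E n) :=
  {x ∈ IcubeD n d | b * x j ≤ a * x i}

def Hset (n : ℕ) (i j : Fin n) (a b : ℝ) : Set (E n) := HsetD n n i j a b

/-- The family `ℋ^d` of the sets `H^d_{ij}(a,b)`, `a, b ∈ {-1,1}`. -/
def HfamD (n d : ℕ) : Set (Set (E n)) :=
  {H | ∃ i j : Fin n, (i : ℕ) < d ∧ (j : ℕ) < d ∧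
      ∃ a b : ℝ, (a = 1 ∨ a = -1) ∧ (b = 1 ∨ b = -1) ∧ H = HsetD n d i j a b}

def Hfam (n : ℕ) : Set (Set (E n)) := HfamD n n

/-- Fundamental subsets of `ℋ^d`. -/
def IsFundSubsetD (n d : ℕ) (S : Set (Set (E n))) : Prop :=
  S ⊆ HfamD n d ∧
  ∀ i j : Fin n, (i : ℕ) < d → (j : ℕ) < d → i ≤ j →
    (HsetD n d i j 1 (-1) ∈ S ∨ HsetD n d i j (-1) 1 ∈ S) ∧
    (HsetD n d i j 1 1 ∈ S ∨ HsetD n d i j (-1) (-1) ∈ S)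

def IsFundSubset (n : ℕ) (S : Set (Set (E n))) : Prop := IsFundSubsetD n n S

/-- `K°_d` (realized inside `ℝ^n` on the slice `I^d × {0}^{n-d}`). -/
def KoD (n d : ℕ) : Set (Set (E n)) :=
  {K | ∃ S, IsFundSubsetD n d S ∧ K = ⋂₀ S}

/-- `K°_n`. -/
def Ko (n : ℕ) : Set (Set (E n)) := KoD n n

/-- Symmetries of the cube `I^n`. -/
def SymI (n : ℕ) (γ : E n → E n) : Prop :=
  Isometry γ ∧ Surjective γ ∧ γ '' Icube n = Icube n

/-- Conformal affine maps `x ↦ λ U x + v`, `λ > 0`, `U ∈ O(n)`. -/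
def ConfAffine (n : ℕ) (L : E n → E n) : Prop :=
  ∃ (c : ℝ) (U : E n ≃ₗᵢ[ℝ] E n) (v : E n), 0 < c ∧ ∀ x, L x = c • U x + v

/-- `d`-dimensional cubes in `ℝ^n` (for `d ≥ 1`). -/
def IsCube (n d : ℕ) (C : Set (E n)) : Prop :=
  ∃ L : E n → E n, ConfAffine n L ∧ L '' C = IcubeD n d

/-- `K°_d(C)` for a `d`-dimensional cube `C` (with `K°_0(C) = {C}`). -/
def KoCube (n d : ℕ) (C : Set (E n)) : Set (Set (E n)) :=
  {K | (d = 0 ∧ K = C) ∨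
       (1 ≤ d ∧ ∃ L : E n → E n, ConfAffine n L ∧ L '' C = IcubeD n d ∧
          ∃ H ∈ KoD n d, K = L ⁻¹' H)}

/-- Faces of `I^d × {0}^{n-d}` of dimension `e`. -/
def IsFaceD (n d : ℕ) (f : Set (E n)) (e : ℕ) : Prop :=
  ∃ J : Fin n → Set ℝ,
    (∀ i : Fin n, (i : ℕ) < d → (J i = Icc (-1 : ℝ) 1 ∨ J i = {-1} ∨ J i = {1})) ∧
    (∀ i : Fin n, d ≤ (i : ℕ) → J i = {0}) ∧
    {i : Fin n | J i = Icc (-1 : ℝ) 1}.ncard = e ∧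
    f = {x : E n | ∀ i, x i ∈ J i}

/-- `c` is a face of dimension `e` of the `d`-dimensional cube `C`. -/
def FaceOfCubeDim (n d : ℕ) (C c : Set (E n)) (e : ℕ) : Prop :=
  ∃ L : E n → E n, ConfAffine n L ∧ L '' C = IcubeD n d ∧
    ∃ f, IsFaceD n d f e ∧ c = L ⁻¹' f

/-- The symmetric decomposition `K_d(C)` of a `d`-dimensional cube `C`. -/
def KcalCube (n d : ℕ) (C : Set (E n)) : Set (Set (E n)) :=
  {K | ∃ c e, FaceOfCubeDim n d C c e ∧ K ∈ KoCube n e c}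

/-- `∂K_d(C)`: union of the `K°` of the proper faces of `C`. -/
def KcalBdCube (n d : ℕ) (C : Set (E n)) : Set (Set (E n)) :=
  {K | ∃ c e, FaceOfCubeDim n d C c e ∧ e < d ∧ K ∈ KoCube n e c}

/-- The symmetric decomposition `K_n` of `I^n`. -/
def Kcal (n : ℕ) : Set (Set (E n)) :=
  {K | ∃ c e, IsFaceD n n c e ∧ K ∈ KoCube n e c}

/-- `∂K_n`: union of the `K°` of the proper faces of `I^n`. -/
def KcalBdI (n : ℕ) : Set (Set (E n)) :=
  {K | ∃ c e, IsFaceD n n c e ∧ e < n ∧ K ∈ KoCube n e c}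

/-- `∂_∘ C`: the union of the proper faces of the `d`-cube `C`. -/
def cellBd (n d : ℕ) (C : Set (E n)) : Set (E n) :=
  ⋃₀ {c | ∃ e, e < d ∧ FaceOfCubeDim n d C c e}

/-- The cone `Cone(x, Y) = {x + t (y - x) : y ∈ Y, t ∈ [0,1]}`. -/
def Cone (n : ℕ) (x : E n) (Y : Set (E n)) : Set (E n) :=
  {z | ∃ y ∈ Y, ∃ t : ℝ, t ∈ Icc (0 : ℝ) 1 ∧ z = x + t • (y - x)}

/-- Standard orthotopes `∏ [-a_i, a_i]`. -/
def StdOrtho (n : ℕ) (a : Fin n → ℝ) : Set (E n) :=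
  {x | ∀ i, x i ∈ Icc (-(a i)) (a i)}

/-- `n`-dimensional orthotopes in `ℝ^n`. -/
def IsOrtho (n : ℕ) (R : Set (E n)) : Prop :=
  ∃ (L : E n → E n) (a : Fin n → ℝ), Isometry L ∧ Surjective L ∧
    (∀ i, 0 < a i) ∧ L '' R = StdOrtho n a

/-- The cubic-stretching of the standard orthotope `∏ [-a_i, a_i]`. -/
def stretch (n : ℕ) (a : Fin n → ℝ) : E n → E n :=
  fun x => WithLp.toLp 2 (fun i => x i / a i)

/-- `K_n(R)` for an `n`-dimensional orthotope `R`. -/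
def KcalOrtho (n : ℕ) (R : Set (E n)) : Set (Set (E n)) :=
  {K | ∃ (L : E n → E n) (a : Fin n → ℝ), Isometry L ∧ Surjective L ∧
      (∀ i, 0 < a i) ∧ L '' R = StdOrtho n a ∧
      ∃ H ∈ Kcal n, K = L ⁻¹' (stretch n a ⁻¹' H)}

/-- Faces of an `n`-dimensional orthotope `R`. -/
def FaceOfOrtho (n : ℕ) (R c : Set (E n)) : Prop :=
  ∃ (L : E n → E n) (a : Fin n → ℝ), Isometry L ∧ Surjective L ∧
    (∀ i, 0 < a i) ∧ L '' R = StdOrtho n a ∧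
    ∃ f e, IsFaceD n n f e ∧ c = L ⁻¹' (stretch n a ⁻¹' f)

/-- The center `x_α` of the subcube `C_α`. -/
def xalpha (n l : ℕ) (α : Fin n → ℕ) : E n :=
  WithLp.toLp 2 (fun i => (2 * (α i : ℝ) + 1 - (l : ℝ)) / (l : ℝ))

/-- `T_α(x) = l (x - x_α)`, mapping `C_α` onto `I^n`. -/
def Talpha (n l : ℕ) (α : Fin n → ℕ) : E n → E n :=
  fun x => (l : ℝ) • (x - xalpha n l α)

/-- The refined symmetric decomposition `K_{n,l}`. -/
def Knl (n l : ℕ) : Set (Set (E n)) :=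
  {K | ∃ α : Fin n → ℕ, (∀ i, α i < l) ∧ ∃ H ∈ Kcal n, K = Talpha n l α ⁻¹' H}

/-- `Γ` is a group of surjective isometries of `ℝ^n`. -/
def IsIsomGroup (n : ℕ) (Γ : Set (E n → E n)) : Prop :=
  (∀ γ ∈ Γ, Isometry γ ∧ Surjective γ) ∧ id ∈ Γ ∧
  (∀ γ ∈ Γ, ∀ γ' ∈ Γ, γ ∘ γ' ∈ Γ) ∧
  ∀ γ ∈ Γ, ∃ γ' ∈ Γ, γ ∘ γ' = id ∧ γ' ∘ γ = id

/-- `D` is a fundamental domain of `Γ`. -/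
def IsFundDom (n : ℕ) (Γ : Set (E n → E n)) (D : Set (E n)) : Prop :=
  (∃ U : Set (E n), U.Nonempty ∧ IsOpen U ∧ IsConnected U ∧ D = closure U) ∧
  (⋃ γ ∈ Γ, γ '' D) = univ ∧
  (∀ x : E n, ∃ V : Set (E n), x ∈ V ∧ IsOpen V ∧
    {γ ∈ Γ | ((γ '' D) ∩ V).Nonempty}.Finite) ∧
  ∀ γ ∈ Γ, γ ≠ id → interior D ∩ interior (γ '' D) = ∅

/-
A fundamental subset contains, for every `i`, one of `H_ii(1,-1) = {x_i ≥ 0}` and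
`H_ii(-1,1) = {x_i ≤ 0}`, so every `H ∈ K°_n` lies in a closed orthant of `I^n`.
Flipping the sign of the coordinates on which that orthant is negative is a symmetry
of the cube taking it onto `[0,1]^n`.
-/

section ReflectCoords

variable {ι : Type*} [Fintype ι]

open Classical in
def reflectCoords (s : Set ι) : EuclideanSpace ℝ ι ≃ₗᵢ[ℝ] EuclideanSpace ℝ ι :=
  .piLpCongrRight 2 fun i => if i ∈ s then .neg ℝ else .refl ℝ ℝ

open Classical in
theorem reflectCoords_apply (s : Set ι) (x : EuclideanSpace ℝ ι) (i : ι) :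
    reflectCoords s x i = if i ∈ s then -x i else x i := by
  by_cases hi : i ∈ s <;> simp [reflectCoords, hi]

theorem abs_reflectCoords_apply (s : Set ι) (x : EuclideanSpace ℝ ι) (i : ι) :
    |reflectCoords s x i| = |x i| := by
  rw [reflectCoords_apply]
  split_ifs <;> simp

end ReflectCoords

theorem mem_Icube_iff {n : ℕ} (x : E n) : x ∈ Icube n ↔ ∀ i, |x i| ≤ 1 := by
  simp [Icube, IcubeD, abs_le]

theorem reflectCoords_image_Icube {n : ℕ} (s : Set (Fin n)) :
    reflectCoords s '' Icube n = Icube n := by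
  ext x
  rw [LinearIsometryEquiv.image_eq_preimage_symm, mem_preimage, mem_Icube_iff, mem_Icube_iff]
  conv_rhs => rw [← (reflectCoords s).apply_symm_apply x]
  simp only [abs_reflectCoords_apply]

theorem symI_reflectCoords {n : ℕ} (s : Set (Fin n)) : SymI n (reflectCoords s) :=
  ⟨(reflectCoords s).isometry, (reflectCoords s).surjective, reflectCoords_image_Icube s⟩

theorem mem_Icc_of_mem_Hset_self_one_neg_one {n : ℕ} {i : Fin n} {x : E n}
    (hx : x ∈ Hset n i i 1 (-1)) : x i ∈ Icc 0 1 := by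
  obtain ⟨⟨hcube, -⟩, hsign⟩ := hx
  exact ⟨by linarith, (hcube i i.isLt).2⟩

theorem neg_mem_Icc_of_mem_Hset_self_neg_one_one {n : ℕ} {i : Fin n} {x : E n}
    (hx : x ∈ Hset n i i (-1) 1) : -x i ∈ Icc 0 1 := by
  obtain ⟨⟨hcube, -⟩, hsign⟩ := hx
  exact ⟨by linarith, by linarith [(hcube i i.isLt).1]⟩

theorem forall_mem_Icc_or_forall_neg_mem_Icc_of_mem_Ko {n : ℕ} {H : Set (E n)}
    (hH : H ∈ Ko n) (i : Fin n) :
    (∀ x ∈ H, x i ∈ Icc 0 1) ∨ ∀ x ∈ H, -x i ∈ Icc 0 1 := by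
  obtain ⟨S, ⟨-, hS⟩, rfl⟩ := hH
  exact (hS i i i.isLt i.isLt le_rfl).1.imp
    (fun h x hx => mem_Icc_of_mem_Hset_self_one_neg_one (hx _ h))
    (fun h x hx => neg_mem_Icc_of_mem_Hset_self_neg_one_one (hx _ h))

theorem stmt4_general (n : ℕ) (H : Set (E n)) (hH : H ∈ Ko n) :
    ∃ T : E n → E n, SymI n T ∧ T '' H ⊆ {x : E n | ∀ i, x i ∈ Icc (0 : ℝ) 1} := by
  refine ⟨reflectCoords {i | ¬∀ x ∈ H, x i ∈ Icc 0 1}, symI_reflectCoords _, ?_⟩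
  rintro _ ⟨x, hx, rfl⟩ i
  rw [reflectCoords_apply]
  split_ifs with hi
  · exact (forall_mem_Icc_or_forall_neg_mem_Icc_of_mem_Ko hH i).resolve_left hi x hx
  · exact not_not.1 hi x hx

/-- For each `H ∈ K°_n` there exists `T ∈ Sym(I^n)` with `T(H) ⊆ [0,1]^n`. -/
theorem stmt4 (n : ℕ) (hn : 1 ≤ n) (H : Set (E n)) (hH : H ∈ Ko n) :
    ∃ T : E n → E n, SymI n T ∧ T '' H ⊆ {x : E n | ∀ i, x i ∈ Icc (0 : ℝ) 1} :=
  stmt4_general n H hH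
end
end

section
/- If H ∈ K°_n satisfies H ∩ ∂I^n ≠ ∅, then there exists a facet F of I^n such that H ∩ ∂I^n ⊆ F. -/
open Set Function

noncomputable section

/-!
For a fundamental subset `S`, the half-spaces `H_{ii}(±1, ∓1)` fix the sign `ε_i` of each
coordinate on `⋂₀ S`, and for `i ≤ j` the member of `{H_{ij}(ε_i, ε_j), H_{ij}(-ε_i, -ε_j)}`
lying in `S` decides, uniformly on `⋂₀ S`, which of `|x_i|`, `|x_j|` is larger. So one
coordinate `k` has the largest absolute value at every point of `⋂₀ S`. A boundary point of
the cube has a coordinate of absolute value `1`, hence `x_k = ε_k`: it lies on that facet.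
-/

lemma mem_Icube {n : ℕ} {x : E n} : x ∈ Icube n ↔ ∀ i, x i ∈ Icc (-1 : ℝ) 1 :=
  ⟨fun hx i => hx.1 i i.isLt, fun hx => ⟨fun i _ => hx i, fun i hi => absurd i.isLt hi.not_gt⟩⟩

lemma Icube_eq_preimage_pi (n : ℕ) :
    Icube n = PiLp.homeomorph 2 (fun _ : Fin n => ℝ) ⁻¹' univ.pi fun _ => Icc (-1) 1 := by
  ext x
  simp only [mem_Icube, mem_preimage, mem_univ_pi]
  rfl

lemma exists_abs_eq_one_of_mem_frontier_Icube {n : ℕ} {x : E n} (hx : x ∈ frontier (Icube n)) :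
    x ∈ Icube n ∧ ∃ i, |x i| = 1 := by
  rw [Icube_eq_preimage_pi, ← Homeomorph.preimage_frontier, frontier, closure_pi_set,
    interior_pi_set finite_univ] at hx
  obtain ⟨hx_cube, hx_int⟩ := hx
  simp only [closure_Icc, interior_Icc, mem_univ_pi, not_forall] at hx_cube hx_int
  obtain ⟨i, hi⟩ := hx_int
  obtain ⟨h₁, h₂⟩ : -1 ≤ x i ∧ x i ≤ 1 := hx_cube i
  refine ⟨mem_Icube.2 hx_cube, i, (abs_eq zero_le_one).2 ?_⟩
  by_contra! h
  exact hi ⟨h₁.lt_of_ne' h.2, h₂.lt_of_ne h.1⟩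

lemma exists_forall_le_of_le_total {ι α : Type*} [Finite ι] [Nonempty ι] [Preorder α]
    {f : ι → α} (h : ∀ i j, f i ≤ f j ∨ f j ≤ f i) : ∃ k, ∀ i, f i ≤ f k := by
  have := Fintype.ofFinite ι
  obtain ⟨k, hk⟩ := Directed.finset_le (r := (· ≤ ·))
    (fun i j => (h i j).elim (fun hij => ⟨j, hij, le_rfl⟩) fun hji => ⟨i, le_rfl, hji⟩)
    Finset.univ
  exact ⟨k, fun i => hk i (Finset.mem_univ i)⟩

def cubeFacet (n : ℕ) (k : Fin n) (s : ℝ) : Set (E n) := {x | x k = s ∧ x ∈ Icube n}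

lemma isFaceD_cubeFacet {n : ℕ} (k : Fin n) {s : ℝ} (hs : s = 1 ∨ s = -1) :
    IsFaceD n n (cubeFacet n k s) (n - 1) := by
  have hs_mem : s ∈ Icc (-1 : ℝ) 1 := by rcases hs with rfl | rfl <;> norm_num
  have hs_ne : ({s} : Set ℝ) ≠ Icc (-1) 1 := fun h => by
    have h₁ : (1 : ℝ) ∈ ({s} : Set ℝ) := h ▸ right_mem_Icc.2 (by norm_num)
    have h₂ : (-1 : ℝ) ∈ ({s} : Set ℝ) := h ▸ left_mem_Icc.2 (by norm_num)
    rw [mem_singleton_iff] at h₁ h₂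
    linarith
  refine ⟨update (fun _ => Icc (-1) 1) k {s}, fun i _ => ?_,
    fun i hi => absurd i.isLt hi.not_gt, ?_, ?_⟩
  · rcases eq_or_ne i k with rfl | hik
    · rcases hs with rfl | rfl <;> simp
    · simp [hik]
  · have : {i | update (fun _ => Icc (-1 : ℝ) 1) k {s} i = Icc (-1) 1} = {k}ᶜ := by
      ext i
      rcases eq_or_ne i k with rfl | hik <;> simp [*]
    rw [this, ncard_compl, ncard_singleton, Nat.card_eq_fintype_card, Fintype.card_fin]
  · ext x
    simp only [cubeFacet, mem_Icube, mem_ofPred_eq]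
    constructor
    · rintro ⟨hxk, hx⟩ i
      rcases eq_or_ne i k with rfl | hik
      · simp [hxk]
      · simpa [hik] using hx i
    · intro hx
      refine ⟨by simpa using hx k, fun i => ?_⟩
      rcases eq_or_ne i k with rfl | hik
      · have hxi : x i = s := by simpa using hx i
        exact hxi ▸ hs_mem
      · simpa [hik] using hx i

lemma le_of_HsetD_mem {n d : ℕ} {S : Set (Set (E n))} {i j : Fin n} {a b : ℝ} {x : E n}
    (hH : HsetD n d i j a b ∈ S) (hx : x ∈ ⋂₀ S) : b * x j ≤ a * x i :=
  (mem_sInter.1 hx _ hH).2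

namespace IsFundSubsetD

variable {n d : ℕ} {S : Set (Set (E n))} {i j : Fin n} {a b : ℝ}

lemma exists_sign (hS : IsFundSubsetD n d S) (hi : (i : ℕ) < d) :
    ∃ ε : ℝ, (ε = 1 ∨ ε = -1) ∧ ∀ x ∈ ⋂₀ S, 0 ≤ ε * x i := by
  rcases (hS.2 i i hi hi le_rfl).1 with h | h
  · exact ⟨1, Or.inl rfl, fun x hx => by linarith [le_of_HsetD_mem h hx]⟩
  · exact ⟨-1, Or.inr rfl, fun x hx => by linarith [le_of_HsetD_mem h hx]⟩

lemma mem_or_neg_mem (hS : IsFundSubsetD n d S) (hi : (i : ℕ) < d) (hj : (j : ℕ) < d)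
    (hij : i ≤ j) (ha : a = 1 ∨ a = -1) (hb : b = 1 ∨ b = -1) :
    HsetD n d i j a b ∈ S ∨ HsetD n d i j (-a) (-b) ∈ S := by
  obtain ⟨hdiff, hsum⟩ := hS.2 i j hi hj hij
  rcases ha with rfl | rfl <;> rcases hb with rfl | rfl <;> simp only [neg_neg, hdiff, hsum, or_comm]

lemma le_total_mul (hS : IsFundSubsetD n d S) (hi : (i : ℕ) < d) (hj : (j : ℕ) < d)
    (ha : a = 1 ∨ a = -1) (hb : b = 1 ∨ b = -1) :
    (∀ x ∈ ⋂₀ S, a * x i ≤ b * x j) ∨ ∀ x ∈ ⋂₀ S, b * x j ≤ a * x i := by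
  wlog hij : i ≤ j generalizing i j a b
  · exact (this hj hi hb ha (le_of_not_ge hij)).symm
  rcases hS.mem_or_neg_mem hi hj hij ha hb with h | h
  · exact Or.inr fun x hx => le_of_HsetD_mem h hx
  · exact Or.inl fun x hx => by linarith [le_of_HsetD_mem h hx]

lemma exists_forall_mul_le [Nonempty (Fin n)] (hS : IsFundSubsetD n n S) {ε : Fin n → ℝ}
    (hε : ∀ i, ε i = 1 ∨ ε i = -1) : ∃ k, ∀ i, ∀ x ∈ ⋂₀ S, ε i * x i ≤ ε k * x k := by
  obtain ⟨k, hk⟩ := exists_forall_le_of_le_total (f := fun i (x : ⋂₀ S) => ε i * x.1 i)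
    fun i j => (hS.le_total_mul i.isLt j.isLt (hε i) (hε j)).imp
      (fun h x => h x x.2) fun h x => h x x.2
  exact ⟨k, fun i x hx => hk i ⟨x, hx⟩⟩

end IsFundSubsetD

theorem stmt5_general (n : ℕ) (H : Set (E n)) (hH : H ∈ Ko n)
    (hne : (H ∩ frontier (Icube n)).Nonempty) :
    ∃ F : Set (E n), IsFaceD n n F (n - 1) ∧ H ∩ frontier (Icube n) ⊆ F := by
  obtain ⟨S, hS, rfl⟩ := hH
  obtain ⟨x₀, -, hx₀⟩ := hne
  obtain ⟨-, i₀, -⟩ := exists_abs_eq_one_of_mem_frontier_Icube hx₀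
  have : Nonempty (Fin n) := ⟨i₀⟩
  choose ε hε hε_nonneg using fun i : Fin n => hS.exists_sign i.isLt
  have hε_abs : ∀ i, |ε i| = 1 := fun i => by rcases hε i with h | h <;> simp [h]
  obtain ⟨k, hk⟩ := hS.exists_forall_mul_le hε
  refine ⟨cubeFacet n k (ε k), isFaceD_cubeFacet k (hε k), ?_⟩
  rintro x ⟨hxH, hx⟩
  obtain ⟨hx_cube, i, hi⟩ := exists_abs_eq_one_of_mem_frontier_Icube hx
  have h_i : ε i * x i = 1 := by
    rw [← abs_of_nonneg (hε_nonneg i x hxH), abs_mul, hε_abs, one_mul, hi]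
  have h_k : ε k * x k ≤ 1 :=
    calc ε k * x k ≤ |ε k * x k| := le_abs_self _
      _ = |x k| := by rw [abs_mul, hε_abs, one_mul]
      _ ≤ 1 := abs_le.2 (mem_Icube.1 hx_cube k)
  refine ⟨?_, hx_cube⟩
  have : ε k * x k = 1 := le_antisymm h_k (h_i ▸ hk i x hxH)
  rcases hε k with h | h <;> rw [h] at this ⊢ <;> linarith

/-- If `H ∈ K°_n` meets `∂I^n`, then `H ∩ ∂I^n` is contained in some facet of `I^n`. -/
theorem stmt5 (n : ℕ) (hn : 1 ≤ n) (H : Set (E n)) (hH : H ∈ Ko n)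
    (hne : (H ∩ frontier (Icube n)).Nonempty) :
    ∃ F : Set (E n), IsFaceD n n F (n - 1) ∧ H ∩ frontier (Icube n) ⊆ F :=
  stmt5_general n H hH hne
end
end

section
/- For each d-dimensional cube C in ℝ^n with 1 ≤ d ≤ n, the following three collections all equal ∂K_d(C): {H ∩ ∂_∘C : H ∈ K°_d(C), H ∩ ∂_∘C ≠ ∅}; {H ∩ F : H ∈ K°_d(C), F a facet of C, H ∩ F ≠ ∅}; and {H ∩ f : H ∈ K°_d(C), f a proper face of C, H ∩ f ≠ ∅}. -/
open Set Function

noncomputable section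

/-!
We work with the cube in normal position `I^d × {0}`. This is harmless because a conformal affine
symmetry of `I^d × {0}` is a signed permutation of the first `d` coordinates: it fixes the centre,
has scale `1`, and a linear isometry preserving the cube maps each `e_i` to a vector of Euclidean
norm `1` and (testing its inverse on sign vectors) of `ℓ¹` norm at most `1`, i.e. to some `±e_j`.
Signed permutations permute the cells of `K°_d` and the faces of each dimension.

On a cell `H` of `I^d` every comparison between `|x_i|` and `|x_j|` is decided uniformly, so one
coordinate `k` is largest throughout and `H ∩ ∂_∘ = H ∩ {x_k = ±1}`. Intersecting `H` with a face
gives a cell of the subface obtained by also fixing the coordinates pinned to `±1` along the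
intersection. Conversely, a cell `W` of a proper face is `H ∩ ∂_∘` and `H ∩ F` for a facet
`F ⊇ W`, with `H` the intersection of all constraints `H_{ij}(a,b)` containing `W`: at each fixed
coordinate `i` of the face the constraints `c_i x_i ≥ ± x_j` push a boundary point of `H` into the
face.
-/

section Signs

variable {a b s x δ : ℝ}

lemma unitSign_mul_self (hs : s = 1 ∨ s = -1) : s * s = 1 := by
  rcases hs with rfl | rfl <;> norm_num

lemma unitSign_mul (ha : a = 1 ∨ a = -1) (hb : b = 1 ∨ b = -1) : a * b = 1 ∨ a * b = -1 := by
  rcases ha with rfl | rfl <;> rcases hb with rfl | rfl <;> norm_num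

lemma unitSign_neg (hs : s = 1 ∨ s = -1) : -s = 1 ∨ -s = -1 := by
  rcases hs with rfl | rfl <;> norm_num

lemma unitSign_mul_le_one (hs : s = 1 ∨ s = -1) (hx : x ∈ Icc (-1 : ℝ) 1) : s * x ≤ 1 := by
  rcases hs with rfl | rfl <;> linarith [hx.1, hx.2]

lemma neg_one_le_unitSign_mul (hs : s = 1 ∨ s = -1) (hx : x ∈ Icc (-1 : ℝ) 1) : -1 ≤ s * x := by
  rcases hs with rfl | rfl <;> linarith [hx.1, hx.2]

lemma eq_of_one_le_unitSign_mul (hs : s = 1 ∨ s = -1) (hx : x ∈ Icc (-1 : ℝ) 1) (h : 1 ≤ s * x) :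
    x = s := by
  rcases hs with rfl | rfl <;> linarith [hx.1, hx.2]

lemma mul_mul_mul_eq_of_eq_mul_mul {t u : ℝ} (ht : t * t = 1) (hu : u * u = 1)
    (h : a * b = δ * t * u) : a * t * (b * u) = δ := by
  linear_combination (t * u) * h + (δ * u * u) * ht + δ * hu

end Signs

section Fundamental

variable {n : ℕ}

lemma HsetD_swap (d : ℕ) (i j : Fin n) (a b : ℝ) :
    HsetD n d i j a b = HsetD n d j i (-b) (-a) := by
  ext x
  simp [HsetD]

def constraintsOn (d : ℕ) (A : Set (Fin n)) : Set (Set (E n)) :=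
  {X | ∃ i ∈ A, ∃ j ∈ A, ∃ a b : ℝ, (a = 1 ∨ a = -1) ∧ (b = 1 ∨ b = -1) ∧ X = HsetD n d i j a b}

/-- Fundamental subsets of the constraints on the coordinates in `A`; the two sign classes of
the paper are `a * b = -1` and `a * b = 1`. -/
def IsFundSubsetOn (d : ℕ) (A : Set (Fin n)) (T : Set (Set (E n))) : Prop :=
  T ⊆ constraintsOn d A ∧ ∀ i ∈ A, ∀ j ∈ A, ∀ δ : ℝ, (δ = 1 ∨ δ = -1) →
    ∃ a b : ℝ, (a = 1 ∨ a = -1) ∧ (b = 1 ∨ b = -1) ∧ a * b = δ ∧ HsetD n d i j a b ∈ T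

def cellsOn (d : ℕ) (A : Set (Fin n)) (P : Set (E n)) : Set (Set (E n)) :=
  {W | ∃ T, IsFundSubsetOn d A T ∧ W = P ∩ ⋂₀ T}

lemma constraintsOn_mono {d : ℕ} {A B : Set (Fin n)} (h : A ⊆ B) :
    constraintsOn d A ⊆ constraintsOn d B := by
  rintro X ⟨i, hi, j, hj, hX⟩
  exact ⟨i, h hi, j, h hj, hX⟩

lemma IsFundSubsetOn.nonempty {d : ℕ} {A : Set (Fin n)} {T : Set (Set (E n))}
    (hT : IsFundSubsetOn d A T) (hA : A.Nonempty) : T.Nonempty := by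
  obtain ⟨i, hi⟩ := hA
  obtain ⟨a, b, -, -, -, hX⟩ := hT.2 i hi i hi 1 (Or.inl rfl)
  exact ⟨_, hX⟩

lemma HfamD_eq_constraintsOn (d : ℕ) : HfamD n d = constraintsOn d {i | (i : ℕ) < d} := by
  ext X
  constructor
  · rintro ⟨i, j, hi, hj, hX⟩
    exact ⟨i, hi, j, hj, hX⟩
  · rintro ⟨i, hi, j, hj, hX⟩
    exact ⟨i, j, hi, hj, hX⟩

lemma IsFundSubsetD.exists_mem {d : ℕ} {S : Set (Set (E n))} (hS : IsFundSubsetD n d S)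
    {i j : Fin n} (hi : (i : ℕ) < d) (hj : (j : ℕ) < d) (hij : i ≤ j) {δ : ℝ}
    (hδ : δ = 1 ∨ δ = -1) :
    ∃ a b : ℝ, (a = 1 ∨ a = -1) ∧ (b = 1 ∨ b = -1) ∧ a * b = δ ∧ HsetD n d i j a b ∈ S := by
  obtain ⟨hneg, hpos⟩ := hS.2 i j hi hj hij
  rcases hδ with rfl | rfl
  · rcases hpos with h | h
    exacts [⟨1, 1, by norm_num, by norm_num, by norm_num, h⟩,
      ⟨-1, -1, by norm_num, by norm_num, by norm_num, h⟩]
  · rcases hneg with h | h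
    exacts [⟨1, -1, by norm_num, by norm_num, by norm_num, h⟩,
      ⟨-1, 1, by norm_num, by norm_num, by norm_num, h⟩]

lemma isFundSubsetD_iff {d : ℕ} {S : Set (Set (E n))} :
    IsFundSubsetD n d S ↔ IsFundSubsetOn d {i | (i : ℕ) < d} S := by
  rw [IsFundSubsetOn, ← HfamD_eq_constraintsOn]
  refine ⟨fun hS => ⟨hS.1, fun i hi j hj δ hδ => ?_⟩, fun hS => ⟨hS.1, fun i j hi hj _ => ⟨?_, ?_⟩⟩⟩
  · rcases le_total i j with hij | hji
    · exact hS.exists_mem hi hj hij hδ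
    · obtain ⟨a, b, ha, hb, hab, h⟩ := hS.exists_mem hj hi hji hδ
      exact ⟨-b, -a, unitSign_neg hb, unitSign_neg ha, by linarith, HsetD_swap d j i a b ▸ h⟩
  · obtain ⟨a, b, ha, hb, hab, h⟩ := hS.2 i hi j hj (-1) (Or.inr rfl)
    rcases ha with rfl | rfl <;> rcases hb with rfl | rfl <;> norm_num at hab
    exacts [Or.inl h, Or.inr h]
  · obtain ⟨a, b, ha, hb, hab, h⟩ := hS.2 i hi j hj 1 (Or.inl rfl)
    rcases ha with rfl | rfl <;> rcases hb with rfl | rfl <;> norm_num at hab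
    exacts [Or.inl h, Or.inr h]

lemma KoD_eq_cellsOn (d : ℕ) : KoD n d = cellsOn d {i : Fin n | (i : ℕ) < d} univ := by
  ext K
  simp [KoD, cellsOn, isFundSubsetD_iff]

end Fundamental

lemma preimage_sInter_eq_inter_sInter {α β : Type*} {f : α → β} {S : Set (Set β)}
    {T : Set (Set α)} {P : Set α} (hT : T.Nonempty)
    (hST : ∀ X ∈ S, ∃ Y ∈ T, f ⁻¹' X = P ∩ Y) (hTS : ∀ Y ∈ T, ∃ X ∈ S, f ⁻¹' X = P ∩ Y) :
    f ⁻¹' ⋂₀ S = P ∩ ⋂₀ T := by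
  ext x
  simp only [mem_preimage, mem_inter_iff, mem_sInter]
  constructor
  · intro hx
    have hY : ∀ Y ∈ T, x ∈ P ∩ Y := fun Y hY => by
      obtain ⟨X, hX, hXY⟩ := hTS Y hY
      exact hXY ▸ hx X hX
    obtain ⟨Y₀, hY₀⟩ := hT
    exact ⟨(hY Y₀ hY₀).1, fun Y h => (hY Y h).2⟩
  · rintro ⟨hP, hx⟩ X hX
    obtain ⟨Y, hY, hXY⟩ := hST X hX
    exact (hXY ▸ ⟨hP, hx Y hY⟩ : x ∈ f ⁻¹' X)

section Relabel

variable {n d d' : ℕ} {A B : Set (Fin n)} {σ : Fin n → Fin n} {η : Fin n → ℝ}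
  {f : E n → E n} {P : Set (E n)}

lemma preimage_mem_cellsOn (hB : B.Nonempty) (hσ : σ '' B = A)
    (hη : ∀ i, η i = 1 ∨ η i = -1)
    (hf : ∀ i ∈ B, ∀ j ∈ B, ∀ a b : ℝ,
      f ⁻¹' HsetD n d' i j a b = P ∩ HsetD n d (σ i) (σ j) (a * η i) (b * η j))
    {W : Set (E n)} (hW : W ∈ cellsOn d' B univ) : f ⁻¹' W ∈ cellsOn d A P := by
  subst hσ
  obtain ⟨S, hS, rfl⟩ := hW
  set T : Set (Set (E n)) := {Y | Y ∈ constraintsOn d (σ '' B) ∧ ∃ X ∈ S, f ⁻¹' X = P ∩ Y}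
  have hmem : ∀ i ∈ B, ∀ j ∈ B, ∀ a b : ℝ, (a = 1 ∨ a = -1) → (b = 1 ∨ b = -1) →
      HsetD n d' i j a b ∈ S → HsetD n d (σ i) (σ j) (a * η i) (b * η j) ∈ T :=
    fun i hi j hj a b ha hb hX => ⟨⟨σ i, mem_image_of_mem σ hi, σ j, mem_image_of_mem σ hj,
      _, _, unitSign_mul ha (hη i), unitSign_mul hb (hη j), rfl⟩, _, hX, hf i hi j hj a b⟩
  have hT : IsFundSubsetOn d (σ '' B) T := by
    refine ⟨fun Y hY => hY.1, ?_⟩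
    rintro _ ⟨i, hi, rfl⟩ _ ⟨j, hj, rfl⟩ δ hδ
    obtain ⟨a, b, ha, hb, hab, hX⟩ :=
      hS.2 i hi j hj (δ * η i * η j) (unitSign_mul (unitSign_mul hδ (hη i)) (hη j))
    exact ⟨_, _, unitSign_mul ha (hη i), unitSign_mul hb (hη j),
      mul_mul_mul_eq_of_eq_mul_mul (unitSign_mul_self (hη i)) (unitSign_mul_self (hη j)) hab,
      hmem i hi j hj a b ha hb hX⟩
  refine ⟨T, hT, ?_⟩
  rw [univ_inter]
  refine preimage_sInter_eq_inter_sInter (hT.nonempty (hB.image σ)) (fun X hX => ?_)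
    fun Y hY => hY.2
  obtain ⟨i, hi, j, hj, a, b, ha, hb, rfl⟩ := hS.1 hX
  exact ⟨_, hmem i hi j hj a b ha hb hX, hf i hi j hj a b⟩

lemma exists_preimage_eq_of_mem_cellsOn (hB : B.Nonempty) (hσ : σ '' B = A)
    (hη : ∀ i, η i = 1 ∨ η i = -1)
    (hf : ∀ i ∈ B, ∀ j ∈ B, ∀ a b : ℝ,
      f ⁻¹' HsetD n d' i j a b = P ∩ HsetD n d (σ i) (σ j) (a * η i) (b * η j))
    {W : Set (E n)} (hW : W ∈ cellsOn d A P) : ∃ W' ∈ cellsOn d' B univ, f ⁻¹' W' = W := by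
  subst hσ
  obtain ⟨T, hT, rfl⟩ := hW
  set S : Set (Set (E n)) := {X | X ∈ constraintsOn d' B ∧ ∃ Y ∈ T, f ⁻¹' X = P ∩ Y}
  have hmem : ∀ i ∈ B, ∀ j ∈ B, ∀ a b : ℝ, (a = 1 ∨ a = -1) → (b = 1 ∨ b = -1) →
      HsetD n d (σ i) (σ j) a b ∈ T → HsetD n d' i j (a * η i) (b * η j) ∈ S := by
    intro i hi j hj a b ha hb hY
    refine ⟨⟨i, hi, j, hj, _, _, unitSign_mul ha (hη i), unitSign_mul hb (hη j), rfl⟩, _, hY, ?_⟩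
    rw [hf i hi j hj, mul_assoc, mul_assoc, unitSign_mul_self (hη i), unitSign_mul_self (hη j),
      mul_one, mul_one]
  have hS : IsFundSubsetOn d' B S := by
    refine ⟨fun X hX => hX.1, fun i hi j hj δ hδ => ?_⟩
    obtain ⟨a, b, ha, hb, hab, hY⟩ := hT.2 (σ i) (mem_image_of_mem σ hi) (σ j)
      (mem_image_of_mem σ hj) (δ * η i * η j) (unitSign_mul (unitSign_mul hδ (hη i)) (hη j))
    exact ⟨_, _, unitSign_mul ha (hη i), unitSign_mul hb (hη j),
      mul_mul_mul_eq_of_eq_mul_mul (unitSign_mul_self (hη i)) (unitSign_mul_self (hη j)) hab,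
      hmem i hi j hj a b ha hb hY⟩
  refine ⟨univ ∩ ⋂₀ S, ⟨S, hS, rfl⟩, ?_⟩
  rw [univ_inter]
  refine preimage_sInter_eq_inter_sInter (hT.nonempty (hB.image σ)) (fun X hX => hX.2) ?_
  intro Y hY
  obtain ⟨_, ⟨i, hi, rfl⟩, _, ⟨j, hj, rfl⟩, a, b, ha, hb, rfl⟩ := hT.1 hY
  refine ⟨_, hmem i hi j hj a b ha hb hY, ?_⟩
  rw [hf i hi j hj, mul_assoc, mul_assoc, unitSign_mul_self (hη i), unitSign_mul_self (hη j),
    mul_one, mul_one]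

end Relabel

lemma exists_eq_unitSign_of_sum_sq_eq_one {ι : Type*} [Fintype ι] {w : ι → ℝ}
    (hsq : ∑ j, w j ^ 2 = 1) (habs : ∑ j, |w j| ≤ 1) :
    ∃ j, (w j = 1 ∨ w j = -1) ∧ ∀ k ≠ j, w k = 0 := by
  classical
  have hle : ∀ j, |w j| ≤ 1 := fun j =>
    (Finset.single_le_sum (fun k _ => abs_nonneg (w k)) (Finset.mem_univ j)).trans habs
  have hsq_le : ∀ j, w j ^ 2 ≤ |w j| := fun j => by
    nlinarith [abs_nonneg (w j), sq_abs (w j), hle j]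
  have heq : ∀ j, w j ^ 2 = |w j| := fun j =>
    (Finset.sum_eq_sum_iff_of_le fun j _ => hsq_le j).1
      (le_antisymm (Finset.sum_le_sum fun j _ => hsq_le j) (habs.trans hsq.ge)) j
      (Finset.mem_univ j)
  obtain ⟨j, hj⟩ : ∃ j, w j ≠ 0 := by
    by_contra! h
    simp [h] at hsq
  have hj1 : |w j| = 1 := by
    have h := heq j
    rw [← sq_abs, sq] at h
    exact (mul_eq_left₀ (abs_ne_zero.2 hj)).1 h
  refine ⟨j, (abs_eq zero_le_one).1 hj1, fun k hk => abs_eq_zero.1 (le_antisymm ?_ (abs_nonneg _))⟩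
  have : |w j| + |w k| ≤ ∑ i, |w i| := by
    rw [← Finset.sum_pair (f := fun i => |w i|) hk.symm]
    exact Finset.sum_le_sum_of_subset_of_nonneg (Finset.subset_univ _)
      fun _ _ _ => abs_nonneg _
  linarith

section Cube

variable {n d : ℕ}

lemma zero_mem_IcubeD : (0 : E n) ∈ IcubeD n d :=
  ⟨fun i _ => by simp, fun i _ => by simp⟩

lemma neg_mem_IcubeD {x : E n} (hx : x ∈ IcubeD n d) : -x ∈ IcubeD n d :=
  ⟨fun i hi => by simpa [neg_le, and_comm] using hx.1 i hi, fun i hi => by simp [hx.2 i hi]⟩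

lemma single_mem_IcubeD {i : Fin n} (hi : (i : ℕ) < d) {s : ℝ} (hs : s ∈ Icc (-1 : ℝ) 1) :
    EuclideanSpace.single i s ∈ IcubeD n d := by
  refine ⟨fun k _ => ?_, fun k hk => ?_⟩
  · by_cases hki : k = i <;> simp [hki, hs]
  · have hki : k ≠ i := by rintro rfl; omega
    simp [hki]

lemma eq_zero_of_forall_two_smul_sub_mem {v : E n}
    (h : ∀ y ∈ IcubeD n d, (2 : ℝ) • v - y ∈ IcubeD n d) : v = 0 := by
  ext k
  by_cases hk : (k : ℕ) < d
  · have h₁ := (h _ (single_mem_IcubeD hk (s := 1) (by norm_num))).1 k hk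
    have h₂ := (h _ (single_mem_IcubeD hk (s := -1) (by norm_num))).1 k hk
    simp only [PiLp.sub_apply, PiLp.smul_apply, smul_eq_mul, PiLp.single_apply, if_pos,
      mem_Icc] at h₁ h₂
    simp only [PiLp.zero_apply]
    linarith [h₁.1, h₂.2]
  · simpa using (h 0 zero_mem_IcubeD).2 k (not_lt.1 hk)

def onesD (n d : ℕ) : E n := WithLp.toLp 2 (fun i => if (i : ℕ) < d then 1 else 0)

lemma onesD_mem : onesD n d ∈ IcubeD n d :=
  ⟨fun i hi => by simp [onesD, hi], fun i hi => by simp [onesD, not_lt.2 hi]⟩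

lemma sum_ite_lt (hdn : d ≤ n) : ∑ i : Fin n, (if (i : ℕ) < d then (1 : ℝ) else 0) = d := by
  rw [Finset.sum_boole, Fin.card_filter_val_lt, min_eq_right hdn]

lemma norm_sq_onesD (hdn : d ≤ n) : ‖onesD n d‖ ^ 2 = d := by
  rw [EuclideanSpace.real_norm_sq_eq, ← sum_ite_lt hdn]
  exact Finset.sum_congr rfl fun i _ => by by_cases hi : (i : ℕ) < d <;> simp [onesD, hi]

lemma norm_sq_le_of_mem_IcubeD (hdn : d ≤ n) {x : E n} (hx : x ∈ IcubeD n d) :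
    ‖x‖ ^ 2 ≤ d := by
  rw [EuclideanSpace.real_norm_sq_eq, ← sum_ite_lt hdn]
  refine Finset.sum_le_sum fun i _ => ?_
  by_cases hi : (i : ℕ) < d
  · simp only [hi, if_true]
    nlinarith [(hx.1 i hi).1, (hx.1 i hi).2]
  · simp [hi, hx.2 i (not_lt.1 hi)]

lemma eq_one_of_smul_image_IcubeD (hd : 1 ≤ d) (hdn : d ≤ n) {c : ℝ} (hc : 0 < c)
    {U : E n ≃ₗᵢ[ℝ] E n} (h : (fun x => c • U x) '' IcubeD n d = IcubeD n d) : c = 1 := by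
  have hd' : (1 : ℝ) ≤ d := by exact_mod_cast hd
  have hnorm : ∀ x, ‖c • U x‖ ^ 2 = c ^ 2 * ‖x‖ ^ 2 := fun x => by
    rw [norm_smul, U.norm_map, mul_pow, Real.norm_eq_abs, sq_abs]
  have hle : c ^ 2 * d ≤ d := by
    have := norm_sq_le_of_mem_IcubeD hdn (h ▸ mem_image_of_mem _ onesD_mem)
    rwa [hnorm, norm_sq_onesD hdn] at this
  obtain ⟨x, hx, hxo⟩ : onesD n d ∈ (fun x => c • U x) '' IcubeD n d := h.symm ▸ onesD_mem
  have hge : (d : ℝ) ≤ c ^ 2 * d := calc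
    (d : ℝ) = c ^ 2 * ‖x‖ ^ 2 := by rw [← norm_sq_onesD hdn, ← hxo, hnorm]
    _ ≤ c ^ 2 * d := mul_le_mul_of_nonneg_left (norm_sq_le_of_mem_IcubeD hdn hx) (sq_nonneg c)
  have hc2 : c ^ 2 = 1 := by nlinarith
  nlinarith

end Cube

section ConfAffine

variable {n : ℕ} {L M : E n → E n}

lemma ConfAffine.comp (hL : ConfAffine n L) (hM : ConfAffine n M) : ConfAffine n (L ∘ M) := by
  obtain ⟨c, U, v, hc, hLx⟩ := hL
  obtain ⟨c', U', v', hc', hMx⟩ := hM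
  refine ⟨c * c', U'.trans U, c • U v' + v, mul_pos hc hc', fun x => ?_⟩
  simp [hLx, hMx, smul_add, smul_smul, add_assoc]

lemma ConfAffine.exists_inverse (hL : ConfAffine n L) :
    ∃ L' : E n → E n, ConfAffine n L' ∧ LeftInverse L' L ∧ RightInverse L' L := by
  obtain ⟨c, U, v, hc, hLx⟩ := hL
  refine ⟨fun y => c⁻¹ • U.symm (y - v), ⟨c⁻¹, U.symm, -(c⁻¹ • U.symm v), inv_pos.2 hc,
    fun x => by simp [sub_eq_add_neg, smul_add]⟩, fun x => ?_, fun y => ?_⟩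
  · simp [hLx, smul_smul, inv_mul_cancel₀ hc.ne']
  · simp [hLx, smul_smul, mul_inv_cancel₀ hc.ne']

lemma ConfAffine.bijective (hL : ConfAffine n L) : Bijective L := by
  obtain ⟨L', -, hl, hr⟩ := hL.exists_inverse
  exact ⟨hl.injective, hr.surjective⟩

lemma ConfAffine.exists_comp_eq (hL : ConfAffine n L) (hM : ConfAffine n M) :
    ∃ g : E n → E n, ConfAffine n g ∧ g ∘ L = M := by
  obtain ⟨L', hL', hl, -⟩ := hL.exists_inverse
  exact ⟨M ∘ L', hM.comp hL', funext fun x => by simp [hl x]⟩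

lemma ConfAffine.exists_linearIsometryEquiv {d : ℕ} (hd : 1 ≤ d) (hdn : d ≤ n)
    (hL : ConfAffine n L) (hLX : L '' IcubeD n d = IcubeD n d) :
    ∃ U : E n ≃ₗᵢ[ℝ] E n, ∀ x, L x = U x := by
  obtain ⟨c, U, v, hc, hLx⟩ := hL
  -- `L (-x) = 2 v - L x`, so the cube is symmetric about `v`
  have hsymm : ∀ y ∈ IcubeD n d, (2 : ℝ) • v - y ∈ IcubeD n d := by
    intro y hy
    rw [← hLX] at hy ⊢
    obtain ⟨x, hx, rfl⟩ := hy
    exact ⟨-x, neg_mem_IcubeD hx, by rw [hLx, hLx, map_neg, smul_neg]; module⟩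
  obtain rfl := eq_zero_of_forall_two_smul_sub_mem hsymm
  have hLU : L = fun x => c • U x := funext fun x => by rw [hLx, add_zero]
  obtain rfl := eq_one_of_smul_image_IcubeD hd hdn hc (hLU ▸ hLX)
  exact ⟨U, fun x => by simp only [hLU, one_smul]⟩

end ConfAffine

section SignedPerm

variable {n d : ℕ}

lemma LinearIsometryEquiv.exists_map_single_eq {V : E n ≃ₗᵢ[ℝ] E n}
    (hV : V '' IcubeD n d = IcubeD n d) {i : Fin n} (hi : (i : ℕ) < d) :
    ∃ j : Fin n, (j : ℕ) < d ∧ ∃ s : ℝ, (s = 1 ∨ s = -1) ∧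
      V (EuclideanSpace.single i 1) = s • EuclideanSpace.single j 1 := by
  set w := V (EuclideanSpace.single i 1)
  have hw : w ∈ IcubeD n d := hV ▸ mem_image_of_mem V (single_mem_IcubeD hi (by norm_num))
  -- testing `V⁻¹` against the sign vector of `w` bounds the `ℓ¹` norm of `w`
  set y : E n := WithLp.toLp 2 (fun j => (SignType.sign (w j) : ℝ))
  have hy : y ∈ IcubeD n d := by
    refine ⟨fun j _ => ?_, fun j hj => by simp [y, hw.2 j hj]⟩
    rcases lt_trichotomy (w j) 0 with h | h | h <;> simp [y, h]
  obtain ⟨x, hx, hxy⟩ : y ∈ V '' IcubeD n d := hV.symm ▸ hy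
  have habs : ∑ j, |w j| ≤ 1 := calc
    ∑ j, |w j| = inner ℝ w y := by simp [y, PiLp.inner_apply, mul_comm]
    _ = x i := by simp [← hxy, w, EuclideanSpace.inner_single_left]
    _ ≤ 1 := (hx.1 i hi).2
  have hsq : ∑ j, w j ^ 2 = 1 := by
    rw [← EuclideanSpace.real_norm_sq_eq, V.norm_map]
    simp
  obtain ⟨j, hj, hzero⟩ := exists_eq_unitSign_of_sum_sq_eq_one hsq habs
  refine ⟨j, ?_, w j, hj, ?_⟩
  · by_contra h
    rcases hj with h' | h' <;> simp [hw.2 j (not_lt.1 h)] at h'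
  · ext k
    by_cases hk : k = j
    · subst hk; simp
    · simp [hk, hzero k hk]

structure IsSignedPerm (d : ℕ) (g : E n → E n) (ρ : Equiv.Perm (Fin n)) (η : Fin n → ℝ) :
    Prop where
  unitSign : ∀ k, η k = 1 ∨ η k = -1
  lt_iff : ∀ k : Fin n, (k : ℕ) < d ↔ (ρ k : ℕ) < d
  preimage_IcubeD : g ⁻¹' IcubeD n d = IcubeD n d
  apply_of_lt : ∀ (x : E n) (k : Fin n), (k : ℕ) < d → g x k = η k * x (ρ k)

lemma LinearIsometryEquiv.exists_isSignedPerm {U : E n ≃ₗᵢ[ℝ] E n}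
    (hU : U '' IcubeD n d = IcubeD n d) : ∃ ρ η, IsSignedPerm d U ρ η := by
  have hU' : U.symm '' IcubeD n d = IcubeD n d := by
    conv_lhs => rw [← hU, image_image]
    simp
  have key : ∀ k : Fin n, ∃ j : Fin n, ∃ s : ℝ, (s = 1 ∨ s = -1) ∧ ((k : ℕ) < d ↔ (j : ℕ) < d) ∧
      ((k : ℕ) < d → U.symm (EuclideanSpace.single k 1) = s • EuclideanSpace.single j 1) ∧
      (¬ (k : ℕ) < d → j = k) := by
    intro k
    by_cases hk : (k : ℕ) < d
    · obtain ⟨j, hj, s, hs, h⟩ := U.symm.exists_map_single_eq hU' hk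
      exact ⟨j, s, hs, iff_of_true hk hj, fun _ => h, fun h' => absurd hk h'⟩
    · exact ⟨k, 1, Or.inl rfl, Iff.rfl, fun h => absurd h hk, fun _ => rfl⟩
  choose G s hs hG hGs hGk using key
  have hinj : Injective G := by
    intro k k' hkk'
    by_cases hk : (k : ℕ) < d
    · have hk' : (k' : ℕ) < d := (hG k').2 (hkk' ▸ (hG k).1 hk)
      by_contra hne
      have h := U.symm.inner_map_map (EuclideanSpace.single k 1) (EuclideanSpace.single k' 1)
      rw [hGs k hk, hGs k' hk', hkk', inner_smul_left, inner_smul_right] at h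
      simp [EuclideanSpace.inner_single_left, hne] at h
      rcases hs k with h' | h' <;> rcases hs k' with h'' | h'' <;> simp [h', h''] at h
    · have hk' : ¬ (k' : ℕ) < d := fun h => hk ((hG k).2 (hkk' ▸ (hG k').1 h))
      rwa [hGk k hk, hGk k' hk'] at hkk'
  refine ⟨Equiv.ofBijective G (Finite.injective_iff_bijective.1 hinj), s,
    ⟨hs, hG, (congrArg (U ⁻¹' ·) hU).symm.trans (U.injective.preimage_image _),
      fun x k hk => ?_⟩⟩
  calc U x k = inner ℝ (EuclideanSpace.single k 1) (U x) := by
        simp [EuclideanSpace.inner_single_left]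
    _ = inner ℝ (U.symm (EuclideanSpace.single k 1)) x := by
        rw [← U.symm.inner_map_map, U.symm_apply_apply]
    _ = s k * x (G k) := by
        rw [hGs k hk, inner_smul_left, EuclideanSpace.inner_single_left]
        simp

lemma ConfAffine.exists_isSignedPerm (hd : 1 ≤ d) (hdn : d ≤ n) {g : E n → E n}
    (hg : ConfAffine n g) (hgX : g '' IcubeD n d = IcubeD n d) : ∃ ρ η, IsSignedPerm d g ρ η := by
  obtain ⟨U, hU⟩ := hg.exists_linearIsometryEquiv hd hdn hgX
  obtain rfl : g = U := funext hU
  exact U.exists_isSignedPerm hgX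

namespace IsSignedPerm

variable {g : E n → E n} {ρ : Equiv.Perm (Fin n)} {η : Fin n → ℝ}

lemma symm_lt_iff (h : IsSignedPerm d g ρ η) (k : Fin n) : (ρ.symm k : ℕ) < d ↔ (k : ℕ) < d := by
  simpa using h.lt_iff (ρ.symm k)

lemma image_lt (h : IsSignedPerm d g ρ η) :
    ρ '' {i : Fin n | (i : ℕ) < d} = {i : Fin n | (i : ℕ) < d} := by
  ext k
  refine ⟨?_, fun hk => ⟨ρ.symm k, ?_, ρ.apply_symm_apply k⟩⟩
  · rintro ⟨i, hi, rfl⟩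
    exact (h.lt_iff i).1 hi
  · rw [mem_ofPred_eq, h.lt_iff, ρ.apply_symm_apply]
    exact hk

lemma preimage_HsetD (h : IsSignedPerm d g ρ η) {i j : Fin n} (hi : (i : ℕ) < d)
    (hj : (j : ℕ) < d) (a b : ℝ) :
    g ⁻¹' HsetD n d i j a b = univ ∩ HsetD n d (ρ i) (ρ j) (a * η i) (b * η j) := by
  ext x
  have hx : g x ∈ IcubeD n d ↔ x ∈ IcubeD n d := Set.ext_iff.1 h.preimage_IcubeD x
  simp only [mem_preimage, HsetD, univ_inter, mem_sep_iff, hx, h.apply_of_lt x i hi,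
    h.apply_of_lt x j hj, mul_assoc]

lemma preimage_mem_KoD (h : IsSignedPerm d g ρ η) (hd : 1 ≤ d) (hdn : d ≤ n)
    {H : Set (E n)} (hH : H ∈ KoD n d) : g ⁻¹' H ∈ KoD n d := by
  rw [KoD_eq_cellsOn] at hH ⊢
  exact preimage_mem_cellsOn ⟨⟨0, by omega⟩, hd⟩ h.image_lt h.unitSign
    (fun i hi j hj a b => h.preimage_HsetD hi hj a b) hH

end IsSignedPerm

end SignedPerm

lemma ncard_setOf_val_lt {n d : ℕ} (hdn : d ≤ n) : {i : Fin n | (i : ℕ) < d}.ncard = d := by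
  rw [Set.ncard_eq_toFinset_card', Set.toFinset_ofPred, Fin.card_filter_val_lt, min_eq_right hdn]

lemma exists_perm_mem_iff_lt {n : ℕ} (A : Set (Fin n)) :
    ∃ ρ : Equiv.Perm (Fin n), ∀ i, i ∈ A ↔ (ρ i : ℕ) < A.ncard := by
  classical
  have hcard : Nat.card A = Nat.card {k : Fin n // (k : ℕ) < A.ncard} := by
    change A.ncard = Nat.card ({k : Fin n | (k : ℕ) < A.ncard} : Set (Fin n))
    rw [Nat.card_coe_set_eq,
      ncard_setOf_val_lt ((Set.ncard_le_ncard (subset_univ A)).trans_eq (by simp))]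
  obtain ⟨e⟩ := Finite.card_eq.1 hcard
  exact ⟨e.extendSubtype, fun i => ⟨e.extendSubtype_mem i,
    fun h => by_contra fun hi => e.extendSubtype_not_mem i hi h⟩⟩

lemma singleton_ne_Icc (s : ℝ) : ({s} : Set ℝ) ≠ Icc (-1) 1 := fun h => by
  have h₁ : (1 : ℝ) ∈ ({s} : Set ℝ) := h ▸ (by norm_num : (1 : ℝ) ∈ Icc (-1 : ℝ) 1)
  have h₂ : (-1 : ℝ) ∈ ({s} : Set ℝ) := h ▸ (by norm_num : (-1 : ℝ) ∈ Icc (-1 : ℝ) 1)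
  simp only [mem_singleton_iff] at h₁ h₂
  linarith

/-- A face of `I^d × {0}` given by its free coordinates and its center, in place of the product
description of `IsFaceD`. -/
structure Face (n d : ℕ) where
  free : Set (Fin n)
  center : E n
  lt_of_mem_free : ∀ i ∈ free, (i : ℕ) < d
  center_of_mem_free : ∀ i ∈ free, center i = 0
  center_of_not_mem_free : ∀ i ∉ free, (i : ℕ) < d → center i = 1 ∨ center i = -1
  center_of_le : ∀ i : Fin n, d ≤ (i : ℕ) → center i = 0

/-- `∂_∘ (I^d × {0})`. -/
def cubeBd (n d : ℕ) : Set (E n) :=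
  {x ∈ IcubeD n d | ∃ i : Fin n, (i : ℕ) < d ∧ (x i = 1 ∨ x i = -1)}

namespace Face

variable {n d : ℕ} (F : Face n d)

def carrier : Set (E n) := {x ∈ IcubeD n d | ∀ i ∉ F.free, x i = F.center i}

def cells : Set (Set (E n)) := cellsOn d F.free F.carrier

lemma center_mem_IcubeD : F.center ∈ IcubeD n d := by
  refine ⟨fun i hi => ?_, F.center_of_le⟩
  by_cases h : i ∈ F.free
  · simp [F.center_of_mem_free i h]
  · rcases F.center_of_not_mem_free i h hi with h' | h' <;> simp [h']

lemma center_mem_carrier : F.center ∈ F.carrier := ⟨F.center_mem_IcubeD, fun _ _ => rfl⟩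

lemma carrier_subset : F.carrier ⊆ IcubeD n d := fun _ hx => hx.1

lemma mem_carrier_iff {x : E n} : x ∈ F.carrier ↔
    (∀ i ∈ F.free, x i ∈ Icc (-1 : ℝ) 1) ∧ ∀ i ∉ F.free, x i = F.center i := by
  refine ⟨fun hx => ⟨fun i hi => hx.1.1 i (F.lt_of_mem_free i hi), hx.2⟩,
    fun ⟨h₁, h₂⟩ => ⟨⟨fun i hi => ?_, fun i hi => ?_⟩, h₂⟩⟩
  · by_cases h : i ∈ F.free
    · exact h₁ i h
    · exact h₂ i h ▸ F.center_mem_IcubeD.1 i hi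
  · have h : i ∉ F.free := fun h => by have := F.lt_of_mem_free i h; omega
    rw [h₂ i h, F.center_of_le i hi]

lemma exists_lt_not_mem_free (hdn : d ≤ n) (hF : F.free.ncard < d) :
    ∃ p : Fin n, (p : ℕ) < d ∧ p ∉ F.free := by
  by_contra! h
  have := Set.ncard_le_ncard (show {i : Fin n | (i : ℕ) < d} ⊆ F.free from h)
  rw [ncard_setOf_val_lt hdn] at this
  omega

lemma carrier_subset_cubeBd (hdn : d ≤ n) (hF : F.free.ncard < d) : F.carrier ⊆ cubeBd n d := by
  obtain ⟨p, hp, hpF⟩ := F.exists_lt_not_mem_free hdn hF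
  exact fun x hx => ⟨hx.1, p, hp, hx.2 p hpF ▸ F.center_of_not_mem_free p hpF hp⟩

open Classical in
def ofPoint (A : Set (Fin n)) (w : E n) (hA : ∀ i ∈ A, (i : ℕ) < d) (hw : w ∈ IcubeD n d)
    (hwA : ∀ i ∉ A, (i : ℕ) < d → w i = 1 ∨ w i = -1) : Face n d where
  free := A
  center := WithLp.toLp 2 (fun i => if i ∈ A then 0 else w i)
  lt_of_mem_free := hA
  center_of_mem_free i hi := by simp [hi]
  center_of_not_mem_free i hi hid := by simpa [hi] using hwA i hi hid
  center_of_le i hi := by simp [hw.2 i hi]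

lemma carrier_ofPoint {A : Set (Fin n)} {w : E n} {hA hw hwA} :
    (ofPoint A w hA hw hwA : Face n d).carrier = {x ∈ IcubeD n d | ∀ i ∉ A, x i = w i} := by
  ext x
  simp +contextual [carrier, ofPoint]

def facetThrough (p : Fin n) (hp : (p : ℕ) < d) (w : E n) (hw : w ∈ IcubeD n d)
    (hwp : w p = 1 ∨ w p = -1) : Face n d :=
  ofPoint {i | (i : ℕ) < d ∧ i ≠ p} w (fun _ hi => hi.1) hw fun i hi hid => by
    obtain rfl : i = p := by simpa [hid] using hi
    exact hwp

variable {p : Fin n} {hp : (p : ℕ) < d} {w : E n} {hw : w ∈ IcubeD n d}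
  {hwp : w p = 1 ∨ w p = -1}

lemma carrier_facetThrough :
    (facetThrough p hp w hw hwp).carrier = {x ∈ IcubeD n d | x p = w p} := by
  rw [facetThrough, carrier_ofPoint]
  refine Set.ext fun x => and_congr_right fun hx => ⟨fun h => h p (by simp), fun h i hi => ?_⟩
  by_cases hid : (i : ℕ) < d
  · obtain rfl : i = p := by simpa [hid] using hi
    exact h
  · rw [hx.2 i (not_lt.1 hid), hw.2 i (not_lt.1 hid)]

lemma ncard_free_facetThrough (hdn : d ≤ n) :
    (facetThrough p hp w hw hwp).free.ncard = d - 1 := by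
  have h : {i : Fin n | (i : ℕ) < d ∧ i ≠ p} = {i : Fin n | (i : ℕ) < d} \ {p} := by
    ext
    simp
  change {i : Fin n | (i : ℕ) < d ∧ i ≠ p}.ncard = d - 1
  rw [h, Set.ncard_sdiff_singleton_of_mem (show p ∈ {i : Fin n | (i : ℕ) < d} from hp),
    ncard_setOf_val_lt hdn]

lemma isFaceD : IsFaceD n d F.carrier F.free.ncard := by
  classical
  refine ⟨fun i => if i ∈ F.free then Icc (-1) 1 else {F.center i}, fun i hi => ?_,
    fun i hi => ?_, ?_, ?_⟩
  · by_cases h : i ∈ F.free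
    · simp [h]
    · rcases F.center_of_not_mem_free i h hi with h' | h' <;> simp [h, h']
  · have h : i ∉ F.free := fun h => by have := F.lt_of_mem_free i h; omega
    simp [h, F.center_of_le i hi]
  · congr 1
    ext i
    by_cases h : i ∈ F.free
    · simp [h]
    · simpa [h] using singleton_ne_Icc (F.center i)
  · ext x
    rw [mem_carrier_iff]
    refine ⟨fun ⟨h₁, h₂⟩ i => ?_, fun h => ⟨fun i hi => ?_, fun i hi => ?_⟩⟩
    · by_cases h : i ∈ F.free <;> simp [h, h₁, h₂]
    · simpa [hi] using h i
    · simpa [hi] using h i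

end Face

lemma IsFaceD.exists_face {n d e : ℕ} {f : Set (E n)} (h : IsFaceD n d f e) :
    ∃ F : Face n d, F.free.ncard = e ∧ f = F.carrier := by
  obtain ⟨J, hJ₁, hJ₂, hcard, rfl⟩ := h
  set w : E n := WithLp.toLp 2 (fun i => sSup (J i))
  have hJ : ∀ i, J i = Icc (-1) 1 ∨ J i = {w i} := by
    intro i
    by_cases hi : (i : ℕ) < d
    · rcases hJ₁ i hi with h | h | h
      · exact Or.inl h
      all_goals exact Or.inr (by simp [w, h])
    · exact Or.inr (by simp [w, hJ₂ i (not_lt.1 hi)])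
  have hA : ∀ i ∈ {i | J i = Icc (-1) 1}, (i : ℕ) < d := fun i h =>
    by_contra fun hi => singleton_ne_Icc 0 (hJ₂ i (not_lt.1 hi) ▸ h)
  have hw : w ∈ IcubeD n d := by
    refine ⟨fun i hi => ?_, fun i hi => by simp [w, hJ₂ i hi]⟩
    rcases hJ₁ i hi with h | h | h <;> simp [w, h, csSup_Icc]
  have hwA : ∀ i ∉ {i | J i = Icc (-1) 1}, (i : ℕ) < d → w i = 1 ∨ w i = -1 := by
    intro i hi hid
    rcases hJ₁ i hid with h | h | h
    · exact absurd h hi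
    all_goals simp [w, h]
  refine ⟨Face.ofPoint _ w hA hw hwA, hcard, ?_⟩
  rw [Face.carrier_ofPoint]
  ext x
  refine ⟨fun hx => ⟨⟨fun i hi => ?_, fun i hi => ?_⟩, fun i hi => ?_⟩, fun hx i => ?_⟩
  · rcases hJ i with h | h
    · simpa [h] using hx i
    · have := hx i
      rw [h, mem_singleton_iff] at this
      exact this ▸ hw.1 i hi
  · simpa [hJ₂ i hi] using hx i
  · simpa [(hJ i).resolve_left hi] using hx i
  · rcases hJ i with h | h
    · simpa [h] using hx.1.1 i (hA i h)
    · simpa [h] using hx.2 i fun h' => singleton_ne_Icc (w i) (h.symm.trans h')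

namespace Face

variable {n d e : ℕ} (F : Face n d) {ρ : Equiv.Perm (Fin n)}

/-- When `ρ` moves the free coordinates onto the first `e` ones, this conformal map carries the
face onto `I^e × {0}`. -/
def normalize (ρ : Equiv.Perm (Fin n)) (x : E n) : E n :=
  LinearIsometryEquiv.piLpCongrLeft 2 ℝ ℝ ρ (x - F.center)

lemma normalize_apply (x : E n) (k : Fin n) :
    F.normalize ρ x k = x (ρ.symm k) - F.center (ρ.symm k) := by
  simp [normalize, Equiv.piCongrLeft'_apply]

lemma confAffine_normalize : ConfAffine n (F.normalize ρ) :=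
  ⟨1, LinearIsometryEquiv.piLpCongrLeft 2 ℝ ℝ ρ,
    -LinearIsometryEquiv.piLpCongrLeft 2 ℝ ℝ ρ F.center, one_pos,
    fun x => by simp [normalize, sub_eq_add_neg]⟩

lemma preimage_normalize_IcubeD (hρ : ∀ i, i ∈ F.free ↔ (ρ i : ℕ) < e) :
    F.normalize ρ ⁻¹' IcubeD n e = F.carrier := by
  ext x
  rw [mem_carrier_iff]
  refine ⟨fun ⟨h₁, h₂⟩ => ⟨fun i hi => ?_, fun i hi => ?_⟩, fun ⟨h₁, h₂⟩ => ⟨fun k hk => ?_,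
    fun k hk => ?_⟩⟩
  · simpa [normalize_apply, F.center_of_mem_free i hi] using h₁ (ρ i) ((hρ i).1 hi)
  · have := h₂ (ρ i) (not_lt.1 ((hρ i).not.1 hi))
    rw [normalize_apply, ρ.symm_apply_apply] at this
    linarith
  · have hk' : ρ.symm k ∈ F.free := (hρ _).2 (by simpa using hk)
    simpa [normalize_apply, F.center_of_mem_free _ hk'] using h₁ _ hk'
  · have hk' : ρ.symm k ∉ F.free := fun h => by have := (hρ _).1 h; simp at this; omega
    simp [normalize_apply, h₂ _ hk']

lemma image_normalize_carrier (hρ : ∀ i, i ∈ F.free ↔ (ρ i : ℕ) < e) :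
    F.normalize ρ '' F.carrier = IcubeD n e := by
  rw [← F.preimage_normalize_IcubeD hρ, image_preimage_eq _ F.confAffine_normalize.bijective.2]

lemma preimage_normalize_HsetD (hρ : ∀ i, i ∈ F.free ↔ (ρ i : ℕ) < e) {i j : Fin n}
    (hi : (i : ℕ) < e) (hj : (j : ℕ) < e) (a b : ℝ) :
    F.normalize ρ ⁻¹' HsetD n e i j a b = F.carrier ∩ HsetD n d (ρ.symm i) (ρ.symm j) a b := by
  have hi' : ρ.symm i ∈ F.free := (hρ _).2 (by simpa using hi)
  have hj' : ρ.symm j ∈ F.free := (hρ _).2 (by simpa using hj)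
  ext x
  simp only [HsetD, mem_preimage, mem_sep_iff, mem_inter_iff, normalize_apply,
    F.center_of_mem_free _ hi', F.center_of_mem_free _ hj', sub_zero]
  rw [← mem_preimage, F.preimage_normalize_IcubeD hρ]
  exact ⟨fun ⟨hx, h⟩ => ⟨hx, F.carrier_subset hx, h⟩, fun ⟨hx, _, h⟩ => ⟨hx, h⟩⟩

lemma cells_eq_image_normalize (hρ : ∀ i, i ∈ F.free ↔ (ρ i : ℕ) < e)
    (hF : F.free.Nonempty) :
    F.cells = preimage (F.normalize ρ) '' KoD n e := by
  have hB : {k : Fin n | (k : ℕ) < e}.Nonempty :=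
    let ⟨i, hi⟩ := hF; ⟨ρ i, (hρ i).1 hi⟩
  have hσ : ρ.symm '' {k : Fin n | (k : ℕ) < e} = F.free := by
    ext i
    simp [ρ.image_symm_eq_preimage, hρ]
  have hf : ∀ i ∈ {k : Fin n | (k : ℕ) < e}, ∀ j ∈ {k : Fin n | (k : ℕ) < e}, ∀ a b : ℝ,
      F.normalize ρ ⁻¹' HsetD n e i j a b =
        F.carrier ∩ HsetD n d (ρ.symm i) (ρ.symm j) (a * 1) (b * 1) := fun i hi j hj a b => by
    simpa only [mul_one] using F.preimage_normalize_HsetD hρ hi hj a b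
  rw [KoD_eq_cellsOn]
  ext W
  refine ⟨fun hW => ?_, ?_⟩
  · obtain ⟨W', hW', rfl⟩ :=
      exists_preimage_eq_of_mem_cellsOn hB hσ (fun _ => Or.inl rfl) hf hW
    exact ⟨W', hW', rfl⟩
  · rintro ⟨W', hW', rfl⟩
    exact preimage_mem_cellsOn hB hσ (fun _ => Or.inl rfl) hf hW'

end Face

section Cells

variable {n d : ℕ}

lemma subset_HsetD_of_left {W : Set (E n)} (hW : W ⊆ IcubeD n d) {i j : Fin n}
    (hj : (j : ℕ) < d) {a b : ℝ} (hb : b = 1 ∨ b = -1) (h : ∀ y ∈ W, a * y i = 1) :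
    W ⊆ HsetD n d i j a b := fun y hy =>
  ⟨hW hy, (h y hy).symm ▸ unitSign_mul_le_one hb ((hW hy).1 j hj)⟩

lemma subset_HsetD_of_right {W : Set (E n)} (hW : W ⊆ IcubeD n d) {i j : Fin n}
    (hi : (i : ℕ) < d) {a b : ℝ} (ha : a = 1 ∨ a = -1) (h : ∀ y ∈ W, b * y j = -1) :
    W ⊆ HsetD n d i j a b := fun y hy =>
  ⟨hW hy, (h y hy).symm ▸ neg_one_le_unitSign_mul ha ((hW hy).1 i hi)⟩

def validConstraints (d : ℕ) (A : Set (Fin n)) (W : Set (E n)) : Set (Set (E n)) :=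
  {X ∈ constraintsOn d A | W ⊆ X}

lemma subset_sInter_validConstraints {A : Set (Fin n)} {W : Set (E n)} :
    W ⊆ ⋂₀ validConstraints d A W := fun _ hx _ hX => hX.2 hx

namespace IsFundSubsetOn

variable {A : Set (Fin n)} {S : Set (Set (E n))}

lemma exists_abs_eq (hS : IsFundSubsetOn d A S) {i : Fin n} (hi : i ∈ A) :
    ∃ s : ℝ, (s = 1 ∨ s = -1) ∧ ∀ x ∈ ⋂₀ S, |x i| = s * x i := by
  obtain ⟨a, b, ha, hb, hab, hX⟩ := hS.2 i hi i hi (-1) (Or.inr rfl)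
  obtain rfl : b = -a := by
    rcases ha with rfl | rfl <;> rcases hb with rfl | rfl <;> (norm_num at hab) <;> norm_num
  refine ⟨a, ha, fun x hx => ?_⟩
  have h := (hx _ hX).2
  rcases ha with rfl | rfl
  · rw [abs_of_nonneg (by linarith), one_mul]
  · rw [abs_of_nonpos (by linarith), neg_one_mul]

lemma abs_le_total (hS : IsFundSubsetOn d A S) {i j : Fin n} (hi : i ∈ A) (hj : j ∈ A)
    {s t : ℝ} (hs : s = 1 ∨ s = -1) (ht : t = 1 ∨ t = -1)
    (hsi : ∀ x ∈ ⋂₀ S, |x i| = s * x i) (htj : ∀ x ∈ ⋂₀ S, |x j| = t * x j) :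
    (∀ x ∈ ⋂₀ S, |x j| ≤ |x i|) ∨ (∀ x ∈ ⋂₀ S, |x i| ≤ |x j|) := by
  obtain ⟨a, b, ha, hb, hab, hX⟩ := hS.2 i hi j hj (s * t) (unitSign_mul hs ht)
  have : (a = s ∧ b = t) ∨ (a = -s ∧ b = -t) := by
    rcases ha with rfl | rfl <;> rcases hb with rfl | rfl <;> rcases hs with rfl | rfl <;>
      rcases ht with rfl | rfl <;> (norm_num at hab) <;> norm_num
  rcases this with ⟨rfl, rfl⟩ | ⟨rfl, rfl⟩
  · exact Or.inl fun x hx => (hsi x hx).symm ▸ (htj x hx).symm ▸ (hx _ hX).2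
  · refine Or.inr fun x hx => ?_
    have := (hx _ hX).2
    rw [hsi x hx, htj x hx]
    linarith

lemma exists_abs_le (hS : IsFundSubsetOn d A S) (hA : A.Nonempty) :
    ∃ k ∈ A, ∃ s : ℝ, (s = 1 ∨ s = -1) ∧ (∀ x ∈ ⋂₀ S, |x k| = s * x k) ∧
      ∀ i ∈ A, ∀ x ∈ ⋂₀ S, |x i| ≤ |x k| := by
  choose! s hs habs using fun i (hi : i ∈ A) => hS.exists_abs_eq hi
  obtain ⟨k, hkA, hk⟩ :=
    A.toFinite.exists_maximalFor (fun i (x : ↥(⋂₀ S)) => |(x : E n) i|) A hA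
  refine ⟨k, hkA, s k, hs k hkA, habs k hkA, fun i hi x hx => ?_⟩
  rcases hS.abs_le_total hkA hi (hs k hkA) (hs i hi) (habs k hkA) (habs i hi) with h | h
  · exact h x hx
  · exact hk hi (fun y => h y.1 y.2) ⟨x, hx⟩

end IsFundSubsetOn

lemma exists_facet_inter_cubeBd_eq (hd : 1 ≤ d) (hdn : d ≤ n) {S : Set (Set (E n))}
    (hS : IsFundSubsetOn d {i | (i : ℕ) < d} S) :
    ∃ F : Face n d, F.free.ncard = d - 1 ∧ ⋂₀ S ∩ cubeBd n d = ⋂₀ S ∩ F.carrier := by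
  obtain ⟨k, hk, s, hs, hks, hmax⟩ := hS.exists_abs_le ⟨⟨0, by omega⟩, hd⟩
  have hw : EuclideanSpace.single k s ∈ IcubeD n d :=
    single_mem_IcubeD hk (by rcases hs with rfl | rfl <;> norm_num)
  refine ⟨Face.facetThrough k hk _ hw (by simpa using hs), Face.ncard_free_facetThrough hdn, ?_⟩
  rw [Face.carrier_facetThrough]
  ext x
  simp only [mem_inter_iff, cubeBd, mem_sep_iff, PiLp.single_apply, if_pos]
  refine ⟨fun ⟨hx, hxc, i, hi, hxi⟩ => ⟨hx, hxc, ?_⟩, fun ⟨hx, hxc, hxk⟩ => ⟨hx, hxc, k, hk, ?_⟩⟩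
  · refine eq_of_one_le_unitSign_mul hs (hxc.1 k hk) ?_
    rw [← hks x hx]
    refine le_trans ?_ (hmax i hi x hx)
    rcases hxi with h | h <;> simp [h]
  · rw [hxk]
    exact hs

def IsPinned (W : Set (E n)) (k : Fin n) : Prop :=
  ∃ s : ℝ, (s = 1 ∨ s = -1) ∧ ∀ y ∈ W, y k = s

lemma isPinned_of_one_le {W : Set (E n)} (hW : W ⊆ IcubeD n d) {k : Fin n} (hk : (k : ℕ) < d)
    {a : ℝ} (ha : a = 1 ∨ a = -1) (h : ∀ y ∈ W, 1 ≤ a * y k) : IsPinned W k :=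
  ⟨a, ha, fun y hy => eq_of_one_le_unitSign_mul ha ((hW hy).1 k hk) (h y hy)⟩

lemma Face.mem_carrier_ofPoint_iff_isPinned {W : Set (E n)} (hW : W ⊆ IcubeD n d) {w : E n}
    (hw : w ∈ W) {hA hw' hwA} {x : E n} (hx : x ∈ IcubeD n d) :
    x ∈ (Face.ofPoint (d := d) {i | (i : ℕ) < d ∧ ¬ IsPinned W i} w hA hw' hwA).carrier ↔
      ∀ k, IsPinned W k → x k = w k := by
  rw [Face.carrier_ofPoint]
  refine ⟨fun h k hk => ?_, fun h => ⟨hx, fun i hi => ?_⟩⟩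
  · by_cases hkd : (k : ℕ) < d
    · exact h.2 k fun hkA => hkA.2 hk
    · rw [hx.2 k (not_lt.1 hkd), (hW hw).2 k (not_lt.1 hkd)]
  · by_cases hid : (i : ℕ) < d
    · exact h i (by simpa [hid] using hi)
    · rw [hx.2 i (not_lt.1 hid), (hW hw).2 i (not_lt.1 hid)]

/-- If `b x_j = 1` at a pinned `j`, the constraint forces `a y_i = 1` on `W`, so `i` is pinned
too; symmetrically if `a x_i = -1` at a pinned `i`. -/
lemma mem_HsetD_of_isPinned {W : Set (E n)} (hW : W ⊆ IcubeD n d) {w x : E n} (hw : w ∈ W)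
    (hx : x ∈ IcubeD n d) {i j : Fin n} (hi : (i : ℕ) < d) (hj : (j : ℕ) < d) {a b : ℝ}
    (ha : a = 1 ∨ a = -1) (hb : b = 1 ∨ b = -1) (hWX : W ⊆ HsetD n d i j a b)
    (hpin : ∀ k, IsPinned W k → x k = w k) (hfree : ¬ IsPinned W i → ¬ IsPinned W j →
      x ∈ HsetD n d i j a b) : x ∈ HsetD n d i j a b := by
  refine ⟨hx, ?_⟩
  by_cases hj' : IsPinned W j
  · obtain ⟨t, ht, hyt⟩ := hj'
    rw [(hpin j ⟨t, ht, hyt⟩).trans (hyt w hw)]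
    rcases unitSign_mul hb ht with h | h
    · have hWi : ∀ y ∈ W, 1 ≤ a * y i := fun y hy => by
        simpa [hyt y hy, h] using (hWX hy).2
      rw [h, hpin i (isPinned_of_one_le hW hi ha hWi)]
      exact hWi w hw
    · rw [h]
      exact neg_one_le_unitSign_mul ha (hx.1 i hi)
  by_cases hi' : IsPinned W i
  · obtain ⟨t, ht, hyt⟩ := hi'
    rw [(hpin i ⟨t, ht, hyt⟩).trans (hyt w hw)]
    rcases unitSign_mul ha ht with h | h
    · rw [h]
      exact unitSign_mul_le_one hb (hx.1 j hj)
    · refine absurd (isPinned_of_one_le hW hj (unitSign_neg hb) fun y hy => ?_) hj'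
      have := (hWX hy).2
      rw [hyt y hy, h] at this
      linarith
  · exact (hfree hi' hj').2

end Cells

namespace Face

variable {n d : ℕ} (F : Face n d)

lemma exists_inter_mem_cells {S : Set (Set (E n))} (hS : IsFundSubsetOn d {i | (i : ℕ) < d} S)
    (hne : (⋂₀ S ∩ F.carrier).Nonempty) :
    ∃ F' : Face n d, F'.free ⊆ F.free ∧ ⋂₀ S ∩ F.carrier ∈ F'.cells := by
  set W := ⋂₀ S ∩ F.carrier
  obtain ⟨w, hw⟩ := hne
  have hWcube : W ⊆ IcubeD n d := fun y hy => F.carrier_subset hy.2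
  have hpinned : ∀ i ∉ F.free, (i : ℕ) < d → IsPinned W i := fun i hi hid =>
    ⟨F.center i, F.center_of_not_mem_free i hi hid, fun y hy => hy.2.2 i hi⟩
  set A : Set (Fin n) := {i | (i : ℕ) < d ∧ ¬ IsPinned W i}
  have hwA : ∀ i ∉ A, (i : ℕ) < d → w i = 1 ∨ w i = -1 := fun i hi hid => by
    obtain ⟨s, hs, hys⟩ : IsPinned W i := by simpa [A, hid] using hi
    exact hys w hw ▸ hs
  set F' := ofPoint A w (fun _ hi => hi.1) (hWcube hw) hwA
  have hF' : ∀ x ∈ IcubeD n d, x ∈ F'.carrier ↔ ∀ k, IsPinned W k → x k = w k :=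
    fun x hx => mem_carrier_ofPoint_iff_isPinned hWcube hw hx
  refine ⟨F', fun i hi => by_contra fun h => hi.2 (hpinned i h hi.1), validConstraints d A W,
    ⟨fun X hX => hX.1, fun i hi j hj δ hδ => ?_⟩, Subset.antisymm (fun y hy => ⟨?_, ?_⟩) ?_⟩
  · obtain ⟨a, b, ha, hb, hab, hX⟩ := hS.2 i hi.1 j hj.1 δ hδ
    exact ⟨a, b, ha, hb, hab, ⟨i, hi, j, hj, a, b, ha, hb, rfl⟩, fun y hy => hy.1 _ hX⟩
  · exact (hF' y (hWcube hy)).2 fun k ⟨s, _, hys⟩ => (hys y hy).trans (hys w hw).symm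
  · exact subset_sInter_validConstraints hy
  · rintro x ⟨hx, hxT⟩
    have hxw := (hF' x (F'.carrier_subset hx)).1 hx
    refine ⟨fun X hX => ?_, F'.carrier_subset hx, fun i hi => ?_⟩
    · obtain ⟨i, hi, j, hj, a, b, ha, hb, rfl⟩ := hS.1 hX
      exact mem_HsetD_of_isPinned hWcube hw (F'.carrier_subset hx) hi hj ha hb
        (fun y hy => hy.1 _ hX) hxw fun hi' hj' =>
          hxT _ ⟨⟨i, ⟨hi, hi'⟩, j, ⟨hj, hj'⟩, a, b, ha, hb, rfl⟩, fun y hy => hy.1 _ hX⟩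
    · by_cases hid : (i : ℕ) < d
      · rw [hxw i (hpinned i hi hid)]
        exact hw.2.2 i hi
      · rw [(F'.carrier_subset hx).2 i (not_lt.1 hid), F.center_of_le i (not_lt.1 hid)]

variable {W : Set (E n)}

lemma center_mem_of_mem_cells (hW : W ∈ F.cells) : F.center ∈ W := by
  obtain ⟨T, hT, rfl⟩ := hW
  refine ⟨F.center_mem_carrier, fun X hX => ?_⟩
  obtain ⟨i, hi, j, hj, a, b, -, -, rfl⟩ := hT.1 hX
  exact ⟨F.center_mem_IcubeD, by simp [F.center_of_mem_free i hi, F.center_of_mem_free j hj]⟩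

lemma isFundSubsetOn_validConstraints (hW : W ∈ F.cells) :
    IsFundSubsetOn d {i | (i : ℕ) < d} (validConstraints d {i | (i : ℕ) < d} W) := by
  obtain ⟨T, hT, rfl⟩ := hW
  have hsub : F.carrier ∩ ⋂₀ T ⊆ IcubeD n d := fun y hy => F.carrier_subset hy.1
  have hfix : ∀ i ∉ F.free, ∀ y ∈ F.carrier ∩ ⋂₀ T, F.center i * y i = F.center i * F.center i :=
    fun i hi y hy => by rw [hy.1.2 i hi]
  refine ⟨fun X hX => hX.1, fun i hi j hj δ hδ => ?_⟩
  by_cases hiF : i ∈ F.free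
  · by_cases hjF : j ∈ F.free
    · obtain ⟨a, b, ha, hb, hab, hX⟩ := hT.2 i hiF j hjF δ hδ
      exact ⟨a, b, ha, hb, hab, ⟨⟨i, hi, j, hj, a, b, ha, hb, rfl⟩, fun y hy => hy.2 _ hX⟩⟩
    · have hc := F.center_of_not_mem_free j hjF hj
      refine ⟨δ * -F.center j, -F.center j, unitSign_mul hδ (unitSign_neg hc), unitSign_neg hc,
        by rw [mul_assoc, unitSign_mul_self (unitSign_neg hc), mul_one],
        ⟨i, hi, j, hj, _, _, unitSign_mul hδ (unitSign_neg hc), unitSign_neg hc, rfl⟩, ?_⟩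
      exact subset_HsetD_of_right hsub hi (unitSign_mul hδ (unitSign_neg hc)) fun y hy => by
        rw [neg_mul, hfix j hjF y hy, unitSign_mul_self hc]
  · have hc := F.center_of_not_mem_free i hiF hi
    refine ⟨F.center i, δ * F.center i, hc, unitSign_mul hδ hc,
      by rw [mul_comm, mul_assoc, unitSign_mul_self hc, mul_one],
      ⟨i, hi, j, hj, _, _, hc, unitSign_mul hδ hc, rfl⟩, ?_⟩
    exact subset_HsetD_of_left hsub hj (unitSign_mul hδ hc) fun y hy => by
      rw [hfix i hiF y hy, unitSign_mul_self hc]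

lemma subset_carrier_of_mem_cells (hW : W ∈ F.cells) : W ⊆ F.carrier := by
  obtain ⟨T, -, rfl⟩ := hW
  exact inter_subset_left

lemma sInter_validConstraints_inter_cubeBd (hdn : d ≤ n) (hF : F.free.ncard < d)
    (hW : W ∈ F.cells) :
    ⋂₀ validConstraints d {i | (i : ℕ) < d} W ∩ cubeBd n d = W := by
  refine Subset.antisymm ?_ fun y hy => ⟨subset_sInter_validConstraints hy,
    F.carrier_subset_cubeBd hdn hF (F.subset_carrier_of_mem_cells hW hy)⟩
  obtain ⟨T, hT, rfl⟩ := hW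
  rintro x ⟨hx, hxc, i₀, hi₀, ht⟩
  refine ⟨⟨hxc, fun i hi => ?_⟩, fun X hX => hx X ⟨constraintsOn_mono
    (fun k hk => F.lt_of_mem_free k hk) (hT.1 hX), fun y hy => hy.2 X hX⟩⟩
  by_cases hid : (i : ℕ) < d
  · have hc := F.center_of_not_mem_free i hi hid
    -- the constraint `c_i x_i ≥ x_{i₀} x_{i₀} = 1` holds on the cell, hence at `x`
    have hX : HsetD n d i i₀ (F.center i) (x i₀) ∈ validConstraints d {i | (i : ℕ) < d}
        (F.carrier ∩ ⋂₀ T) :=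
      ⟨⟨i, hid, i₀, hi₀, _, _, hc, ht, rfl⟩, subset_HsetD_of_left
        (fun y hy => F.carrier_subset hy.1) hi₀ ht fun y hy => by
          rw [hy.1.2 i hi, unitSign_mul_self hc]⟩
    exact eq_of_one_le_unitSign_mul hc (hxc.1 i hid)
      ((unitSign_mul_self ht).symm.le.trans (hx _ hX).2)
  · rw [hxc.2 i (not_lt.1 hid), F.center_of_le i (not_lt.1 hid)]

lemma exists_sInter_inter_eq (hdn : d ≤ n) (hF : F.free.ncard < d) (hW : W ∈ F.cells) :
    ∃ S, IsFundSubsetOn d {i | (i : ℕ) < d} S ∧ ⋂₀ S ∩ cubeBd n d = W ∧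
      ∃ F' : Face n d, F'.free.ncard = d - 1 ∧ ⋂₀ S ∩ F'.carrier = W := by
  have hbd := F.sInter_validConstraints_inter_cubeBd hdn hF hW
  refine ⟨_, F.isFundSubsetOn_validConstraints hW, hbd, ?_⟩
  obtain ⟨p, hp, hpF⟩ := F.exists_lt_not_mem_free hdn hF
  set F' := facetThrough p hp F.center F.center_mem_IcubeD (F.center_of_not_mem_free p hpF hp)
  have hF' : F'.free.ncard = d - 1 := ncard_free_facetThrough hdn
  refine ⟨F', hF', Subset.antisymm ?_ fun y hy => ⟨subset_sInter_validConstraints hy, ?_⟩⟩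
  · exact (inter_subset_inter_right _ (F'.carrier_subset_cubeBd hdn (by omega))).trans hbd.subset
  · have hy' := F.subset_carrier_of_mem_cells hW hy
    rw [carrier_facetThrough]
    exact ⟨hy'.1, hy'.2 p hpF⟩

end Face

lemma IsSignedPerm.preimage_carrier_eq {n d : ℕ} {g : E n → E n} {ρ : Equiv.Perm (Fin n)}
    {η : Fin n → ℝ} (h : IsSignedPerm d g ρ η) (F : Face n d) :
    g ⁻¹' F.carrier = {x ∈ IcubeD n d |
      ∀ k ∉ ρ '' F.free, x k = η (ρ.symm k) * F.center (ρ.symm k)} := by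
  ext x
  have hx : g x ∈ IcubeD n d ↔ x ∈ IcubeD n d := Set.ext_iff.1 h.preimage_IcubeD x
  change (g x ∈ IcubeD n d ∧ ∀ i ∉ F.free, g x i = F.center i) ↔ (x ∈ IcubeD n d ∧ _)
  rw [hx]
  refine and_congr_right fun hxc => ⟨fun h' k hk => ?_, fun h' i hi => ?_⟩
  · have hk' : ρ.symm k ∉ F.free := fun h'' => hk ⟨_, h'', ρ.apply_symm_apply k⟩
    by_cases hkd : (k : ℕ) < d
    · have hgx := h' _ hk'
      rw [h.apply_of_lt x _ ((h.symm_lt_iff k).2 hkd), ρ.apply_symm_apply] at hgx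
      rw [← hgx, ← mul_assoc, unitSign_mul_self (h.unitSign _), one_mul]
    · simp [hxc.2 k (not_lt.1 hkd),
        F.center_of_le _ (not_lt.1 fun h'' => hkd ((h.symm_lt_iff k).1 h''))]
  · by_cases hid : (i : ℕ) < d
    · rw [h.apply_of_lt x i hid, h' (ρ i) fun ⟨j, hj, hji⟩ => hi (ρ.injective hji ▸ hj)]
      simp [← mul_assoc, unitSign_mul_self (h.unitSign i)]
    · rw [(hx.2 hxc).2 i (not_lt.1 hid), F.center_of_le i (not_lt.1 hid)]

lemma IsSignedPerm.exists_preimage_carrier_eq {n d : ℕ} {g : E n → E n}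
    {ρ : Equiv.Perm (Fin n)} {η : Fin n → ℝ} (h : IsSignedPerm d g ρ η) (F : Face n d) :
    ∃ F' : Face n d, F'.free.ncard = F.free.ncard ∧ g ⁻¹' F.carrier = F'.carrier := by
  set w : E n := WithLp.toLp 2 (fun k => η (ρ.symm k) * F.center (ρ.symm k))
  have hw : w ∈ IcubeD n d := by
    refine ⟨fun k hk => ?_, fun k hk => ?_⟩
    · have hc := F.center_mem_IcubeD.1 _ ((h.symm_lt_iff k).2 hk)
      exact ⟨neg_one_le_unitSign_mul (h.unitSign _) hc, unitSign_mul_le_one (h.unitSign _) hc⟩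
    · simp [w, F.center_of_le _ (not_lt.1 fun h' => not_lt.2 hk ((h.symm_lt_iff k).1 h'))]
  have hwA : ∀ k ∉ ρ '' F.free, (k : ℕ) < d → w k = 1 ∨ w k = -1 := fun k hk hkd => by
    have hk' : ρ.symm k ∉ F.free := fun h' => hk ⟨_, h', ρ.apply_symm_apply k⟩
    rcases F.center_of_not_mem_free _ hk' ((h.symm_lt_iff k).2 hkd) with hc | hc <;>
      rcases h.unitSign (ρ.symm k) with hη | hη <;> simp [w, hc, hη]
  refine ⟨Face.ofPoint (ρ '' F.free) w ?_ hw hwA, ncard_image_of_injective _ ρ.injective, ?_⟩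
  · rintro _ ⟨i, hi, rfl⟩
    exact (h.lt_iff i).1 (F.lt_of_mem_free i hi)
  rw [Face.carrier_ofPoint, h.preimage_carrier_eq F]

lemma koCube_eq_image {n e : ℕ} (he : 1 ≤ e) (hen : e ≤ n) {c : Set (E n)} {L : E n → E n}
    (hL : ConfAffine n L) (hLc : L '' c = IcubeD n e) : KoCube n e c = preimage L '' KoD n e := by
  ext K
  constructor
  · rintro (⟨rfl, -⟩ | ⟨-, L', hL', hL'c, H, hH, rfl⟩)
    · omega
    obtain ⟨g, hg, rfl⟩ := hL.exists_comp_eq hL'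
    have hgX : g '' IcubeD n e = IcubeD n e :=
      (congrArg (g '' ·) hLc).symm.trans ((image_comp g L c).symm.trans hL'c)
    obtain ⟨ρ, η, hsp⟩ := hg.exists_isSignedPerm he hen hgX
    exact ⟨g ⁻¹' H, hsp.preimage_mem_KoD he hen hH, rfl⟩
  · rintro ⟨H, hH, rfl⟩
    exact Or.inr ⟨he, L, hL, hLc, H, hH, rfl⟩

lemma Face.koCube_preimage_carrier_eq {n d : ℕ} (F : Face n d) {L : E n → E n}
    (hL : ConfAffine n L) :
    KoCube n F.free.ncard (L ⁻¹' F.carrier) = preimage L '' F.cells := by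
  obtain ⟨ρ, hρ⟩ := exists_perm_mem_iff_lt F.free
  rcases Nat.eq_zero_or_pos F.free.ncard with h0 | hpos
  · have hfree : F.free = ∅ := (Set.ncard_eq_zero).1 h0
    have hcells : F.cells = {F.carrier} := by
      ext W
      refine ⟨fun ⟨T, hT, hW⟩ => ?_, fun hW => ⟨∅, ⟨empty_subset _, by simp [hfree]⟩, by simpa⟩⟩
      have hT' : T = ∅ := subset_empty_iff.1 fun X hX => by
        simpa [constraintsOn, hfree] using hT.1 hX
      simpa [hT'] using hW
    ext K
    simp [KoCube, h0, hcells]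
  · have hen : F.free.ncard ≤ n := (Set.ncard_le_ncard (subset_univ _)).trans_eq (by simp)
    rw [koCube_eq_image hpos hen (F.confAffine_normalize.comp hL)
      (by rw [image_comp, image_preimage_eq _ hL.bijective.2, F.image_normalize_carrier hρ]),
      F.cells_eq_image_normalize hρ ((Set.ncard_pos).1 hpos), image_image]
    rfl

section NormalizedCube

variable {n d : ℕ} {C : Set (E n)} {L₀ : E n → E n}

lemma faceOfCubeDim_iff (hd : 1 ≤ d) (hdn : d ≤ n) (hL₀ : ConfAffine n L₀)
    (hL₀C : L₀ '' C = IcubeD n d) {c : Set (E n)} {e : ℕ} :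
    FaceOfCubeDim n d C c e ↔ ∃ F : Face n d, F.free.ncard = e ∧ c = L₀ ⁻¹' F.carrier := by
  constructor
  · rintro ⟨L, hL, hLC, f, hf, rfl⟩
    obtain ⟨g, hg, rfl⟩ := hL₀.exists_comp_eq hL
    have hgX : g '' IcubeD n d = IcubeD n d :=
      (congrArg (g '' ·) hL₀C).symm.trans ((image_comp g L₀ C).symm.trans hLC)
    obtain ⟨ρ, η, hsp⟩ := hg.exists_isSignedPerm hd hdn hgX
    obtain ⟨F, rfl, rfl⟩ := hf.exists_face
    obtain ⟨F', hF', hgF⟩ := hsp.exists_preimage_carrier_eq F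
    exact ⟨F', hF', by rw [preimage_comp, hgF]⟩
  · rintro ⟨F, rfl, rfl⟩
    exact ⟨L₀, hL₀, hL₀C, F.carrier, F.isFaceD, rfl⟩

lemma cellBd_eq_preimage (hd : 1 ≤ d) (hdn : d ≤ n) (hL₀ : ConfAffine n L₀)
    (hL₀C : L₀ '' C = IcubeD n d) : cellBd n d C = L₀ ⁻¹' cubeBd n d := by
  ext x
  simp only [cellBd, mem_sUnion, mem_ofPred_eq, faceOfCubeDim_iff hd hdn hL₀ hL₀C]
  constructor
  · rintro ⟨_, ⟨e, he, F, rfl, rfl⟩, hx⟩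
    exact F.carrier_subset_cubeBd hdn he hx
  · rintro ⟨hx, i, hi, ht⟩
    refine ⟨_, ⟨d - 1, by omega, Face.facetThrough i hi _ hx ht,
      Face.ncard_free_facetThrough hdn, rfl⟩, ?_⟩
    simp [Face.carrier_facetThrough, hx]

lemma mem_kcalBdCube_iff (hd : 1 ≤ d) (hdn : d ≤ n) (hL₀ : ConfAffine n L₀)
    (hL₀C : L₀ '' C = IcubeD n d) {K : Set (E n)} :
    K ∈ KcalBdCube n d C ↔ ∃ F : Face n d, F.free.ncard < d ∧ ∃ W ∈ F.cells, K = L₀ ⁻¹' W := by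
  simp only [KcalBdCube, mem_ofPred_eq, faceOfCubeDim_iff hd hdn hL₀ hL₀C]
  constructor
  · rintro ⟨_, _, ⟨F, rfl, rfl⟩, he, hK⟩
    obtain ⟨W, hW, rfl⟩ := F.koCube_preimage_carrier_eq hL₀ ▸ hK
    exact ⟨F, he, W, hW, rfl⟩
  · rintro ⟨F, he, W, hW, rfl⟩
    exact ⟨_, _, ⟨F, rfl, rfl⟩, he, F.koCube_preimage_carrier_eq hL₀ ▸ ⟨W, hW, rfl⟩⟩

lemma inter_mem_kcalBdCube (hd : 1 ≤ d) (hdn : d ≤ n) (hL₀ : ConfAffine n L₀)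
    (hL₀C : L₀ '' C = IcubeD n d) {H f : Set (E n)} {e : ℕ} (hH : H ∈ KoCube n d C)
    (hf : FaceOfCubeDim n d C f e) (he : e < d) (hne : (H ∩ f).Nonempty) :
    H ∩ f ∈ KcalBdCube n d C := by
  rw [koCube_eq_image hd hdn hL₀ hL₀C, KoD_eq_cellsOn] at hH
  obtain ⟨_, ⟨S, hS, rfl⟩, rfl⟩ := hH
  obtain ⟨F, rfl, rfl⟩ := (faceOfCubeDim_iff hd hdn hL₀ hL₀C).1 hf
  rw [univ_inter, ← preimage_inter] at hne ⊢
  obtain ⟨x, hx⟩ := hne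
  obtain ⟨F', hF'F, hW⟩ := F.exists_inter_mem_cells hS ⟨L₀ x, hx⟩
  exact (mem_kcalBdCube_iff hd hdn hL₀ hL₀C).2
    ⟨F', (Set.ncard_le_ncard hF'F).trans_lt he, _, hW, rfl⟩

lemma exists_koCube_of_mem_kcalBdCube (hd : 1 ≤ d) (hdn : d ≤ n) (hL₀ : ConfAffine n L₀)
    (hL₀C : L₀ '' C = IcubeD n d) {K : Set (E n)} (hK : K ∈ KcalBdCube n d C) :
    ∃ H ∈ KoCube n d C, K.Nonempty ∧ K = H ∩ cellBd n d C ∧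
      ∃ F, FaceOfCubeDim n d C F (d - 1) ∧ K = H ∩ F := by
  obtain ⟨F, hF, W, hW, rfl⟩ := (mem_kcalBdCube_iff hd hdn hL₀ hL₀C).1 hK
  obtain ⟨S, hS, hSbd, F', hF', hSF'⟩ := F.exists_sInter_inter_eq hdn hF hW
  obtain ⟨x, hx⟩ := hL₀.bijective.2 F.center
  refine ⟨L₀ ⁻¹' ⋂₀ S, ?_, ⟨x, ?_⟩, ?_, L₀ ⁻¹' F'.carrier,
    (faceOfCubeDim_iff hd hdn hL₀ hL₀C).2 ⟨F', hF', rfl⟩, by rw [← preimage_inter, hSF']⟩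
  · rw [koCube_eq_image hd hdn hL₀ hL₀C, KoD_eq_cellsOn]
    exact ⟨univ ∩ ⋂₀ S, ⟨S, hS, rfl⟩, by rw [univ_inter]⟩
  · simpa [hx] using F.center_mem_of_mem_cells hW
  · rw [cellBd_eq_preimage hd hdn hL₀ hL₀C, ← preimage_inter, hSbd]

lemma exists_facet_inter_cellBd_eq (hd : 1 ≤ d) (hdn : d ≤ n) (hL₀ : ConfAffine n L₀)
    (hL₀C : L₀ '' C = IcubeD n d) {H : Set (E n)} (hH : H ∈ KoCube n d C) :
    ∃ F, FaceOfCubeDim n d C F (d - 1) ∧ H ∩ cellBd n d C = H ∩ F := by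
  rw [koCube_eq_image hd hdn hL₀ hL₀C, KoD_eq_cellsOn] at hH
  obtain ⟨_, ⟨S, hS, rfl⟩, rfl⟩ := hH
  obtain ⟨F, hF, hSF⟩ := exists_facet_inter_cubeBd_eq hd hdn hS
  refine ⟨L₀ ⁻¹' F.carrier, (faceOfCubeDim_iff hd hdn hL₀ hL₀C).2 ⟨F, hF, rfl⟩, ?_⟩
  rw [cellBd_eq_preimage hd hdn hL₀ hL₀C, univ_inter, ← preimage_inter, hSF, preimage_inter]

end NormalizedCube

/-- The three collections `{H ∩ ∂_∘C}`, `{H ∩ F : F facet}`, `{H ∩ f : f proper face}`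
(each with `H ∈ K°_d(C)` and nonempty intersection) all equal `∂K_d(C)`. -/
theorem stmt8 (n d : ℕ) (hd : 1 ≤ d) (hdn : d ≤ n) (C : Set (E n))
    (hC : IsCube n d C) :
    {K | ∃ H ∈ KoCube n d C, (H ∩ cellBd n d C).Nonempty ∧ K = H ∩ cellBd n d C}
      = KcalBdCube n d C ∧
    {K | ∃ H ∈ KoCube n d C, ∃ F, FaceOfCubeDim n d C F (d - 1) ∧
        (H ∩ F).Nonempty ∧ K = H ∩ F} = KcalBdCube n d C ∧
    {K | ∃ H ∈ KoCube n d C, ∃ f e, FaceOfCubeDim n d C f e ∧ e < d ∧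
        (H ∩ f).Nonempty ∧ K = H ∩ f} = KcalBdCube n d C := by
  obtain ⟨L₀, hL₀, hL₀C⟩ := hC
  have hinter := @inter_mem_kcalBdCube n d C L₀ hd hdn hL₀ hL₀C
  have hcell := @exists_koCube_of_mem_kcalBdCube n d C L₀ hd hdn hL₀ hL₀C
  refine ⟨Subset.antisymm ?_ ?_, Subset.antisymm ?_ ?_, Subset.antisymm ?_ ?_⟩
  · rintro K ⟨H, hH, hne, rfl⟩
    obtain ⟨F, hF, hHF⟩ := exists_facet_inter_cellBd_eq hd hdn hL₀ hL₀C hH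
    rw [hHF] at hne ⊢
    exact hinter hH hF (by omega) hne
  · intro K hK
    obtain ⟨H, hH, hne, hKH, -⟩ := hcell hK
    exact ⟨H, hH, hKH ▸ hne, hKH⟩
  · rintro K ⟨H, hH, F, hF, hne, rfl⟩
    exact hinter hH hF (by omega) hne
  · intro K hK
    obtain ⟨H, hH, hne, -, F, hF, hKF⟩ := hcell hK
    exact ⟨H, hH, F, hF, hKF ▸ hne, hKF⟩
  · rintro K ⟨H, hH, f, e, hf, he, hne, rfl⟩
    exact hinter hH hf he hne
  · intro K hK
    obtain ⟨H, hH, hne, -, F, hF, hKF⟩ := hcell hK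
    exact ⟨H, hH, F, d - 1, hF, by omega, hKF ▸ hne, hKF⟩
end
end

section
/- Every element of K_n is a simplex, i.e., the convex hull of a finite affinely independent set of points in ℝ^n. -/
open Set Function

noncomputable section

/-!
A set `⋂₀ S` cut out of the cube by a fundamental family is compact and convex, and it is
stable under applying, coordinatewise, any odd monotone self-map of `[-1, 1]`. Writing a point
as `t • sign x + (1 - t) • shrink t x`, with `t` below every nonzero `|x i|`, shows that each
extreme point is a sign vector (entries in `{-1, 0, 1}`), so by Krein–Milman the set is the convex
hull of its sign vectors. Since a fundamental family compares `±x i` with `±x j` for all `i, j`,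
of any two of these sign vectors one agrees with the other on its support. Such a chain is
affinely independent: its top element is nonzero at a coordinate where all the others vanish.
Faces of dimension `0` are points, and conformal affine maps preserve simplices.
-/

namespace CubeSimplex

section Simplex

variable {V : Type*} [AddCommGroup V] [Module ℝ V]

def IsSimplex (K : Set V) : Prop :=
  ∃ s : Finset V, AffineIndependent ℝ (Subtype.val : {x // x ∈ s} → V) ∧
    K = convexHull ℝ (s : Set V)

lemma isSimplex_convexHull {s : Set V} (hs : s.Finite)
    (hind : AffineIndependent ℝ ((↑) : s → V)) : IsSimplex (convexHull ℝ s) :=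
  ⟨hs.toFinset, (affineIndependent_equiv (Equiv.subtypeEquivRight fun _ => hs.mem_toFinset)).2 hind,
    by rw [hs.coe_toFinset]⟩

lemma isSimplex_singleton (p : V) : IsSimplex ({p} : Set V) :=
  ⟨{p}, affineIndependent_of_subsingleton ℝ _, by simp⟩

lemma IsSimplex.preimage {K : Set V} (hK : IsSimplex K) (A : V ≃ᵃ[ℝ] V) :
    IsSimplex (A ⁻¹' K) := by
  obtain ⟨s, hind, rfl⟩ := hK
  rw [← A.image_symm, ← AffineEquiv.coe_toAffineMap, AffineMap.image_convexHull]
  exact isSimplex_convexHull (s.finite_toSet.image _)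
    (A.symm.affineIndependent_set_of_eq_iff.2 hind)

lemma affineIndependent_insert [DecidableEq V] {s : Finset V} {a : V}
    (hs : AffineIndependent ℝ ((↑) : {x // x ∈ s} → V)) (ha : a ∉ affineSpan ℝ (s : Set V)) :
    AffineIndependent ℝ ((↑) : {x // x ∈ insert a s} → V) := by
  refine AffineIndependent.affineIndependent_of_notMem_span
    (i := ⟨a, Finset.mem_insert_self a s⟩) ?_ ?_
  · let f : {y : {x // x ∈ insert a s} // y ≠ ⟨a, Finset.mem_insert_self a s⟩} ↪ {x // x ∈ s} :=
      ⟨fun y => ⟨y.1.1, (Finset.mem_insert.1 y.1.2).resolve_left fun h => y.2 (Subtype.ext h)⟩,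
        fun y z h => by ext; exact congrArg (Subtype.val : {x // x ∈ s} → V) h⟩
    exact hs.comp_embedding f
  · refine fun h => ha (affineSpan_mono ℝ ?_ h)
    rintro _ ⟨y, hy, rfl⟩
    exact (Finset.mem_insert.1 y.2).resolve_left fun h => hy (Subtype.ext h)

end Simplex

section Chain

open Finset

variable {ι : Type*} [Fintype ι] {p q : EuclideanSpace ℝ ι}

def Extends (p q : EuclideanSpace ℝ ι) : Prop := ∀ i, p i ≠ 0 → q i = p i

def supp (p : EuclideanSpace ℝ ι) : Finset ι := {i | p i ≠ 0}

lemma Extends.supp_subset (h : Extends p q) : supp p ⊆ supp q := by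
  intro i hi
  simp only [supp, mem_filter_univ] at hi ⊢
  rwa [h i hi]

lemma Extends.eq_of_card_supp_le (h : Extends p q) (hc : #(supp q) ≤ #(supp p)) : p = q := by
  have hsupp := eq_of_subset_of_card_le h.supp_subset hc
  ext i
  by_cases hp : p i = 0
  · have hq : i ∉ supp q := hsupp ▸ by simp [supp, hp]
    simp only [supp, mem_filter_univ, not_not] at hq
    rw [hp, hq]
  · exact (h i hp).symm

lemma Extends.exists_gap (h : Extends p q) (hne : p ≠ q) : ∃ i, q i ≠ 0 ∧ p i = 0 := by
  by_contra! hgap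
  refine hne (PiLp.ext fun i => ?_)
  by_cases hp : p i = 0
  · by_cases hq : q i = 0
    · rw [hp, hq]
    · exact absurd hp (hgap i hq)
  · exact (h i hp).symm

lemma _root_.IsChain.extends_of_card_supp_le {s : Set (EuclideanSpace ℝ ι)}
    (hs : IsChain Extends s) (hp : p ∈ s) (hq : q ∈ s) (hc : #(supp p) ≤ #(supp q)) :
    Extends p q := by
  rcases eq_or_ne p q with rfl | hne
  · exact fun _ _ => rfl
  rcases hs hp hq hne with h | h
  · exact h
  · rw [h.eq_of_card_supp_le hc]
    exact fun _ _ => rfl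

lemma notMem_affineSpan_of_coord_eq_zero {s : Set (EuclideanSpace ℝ ι)} {i : ι}
    (hs : ∀ x ∈ s, x i = 0) (hp : p i ≠ 0) : p ∉ affineSpan ℝ s := by
  let H : AffineSubspace ℝ (EuclideanSpace ℝ ι) :=
    (LinearMap.ker ((EuclideanSpace.proj i : StrongDual ℝ _) :
      EuclideanSpace ℝ ι →ₗ[ℝ] ℝ)).toAffineSubspace
  exact fun hspan => hp (affineSpan_le (Q := H) |>.2 hs hspan)

lemma _root_.IsChain.affineIndependent {s : Finset (EuclideanSpace ℝ ι)}
    (hs : IsChain Extends (s : Set (EuclideanSpace ℝ ι))) :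
    AffineIndependent ℝ ((↑) : {x // x ∈ s} → EuclideanSpace ℝ ι) := by
  classical
  revert hs
  refine Finset.induction_on_max_value (fun p => #(supp p)) s
    (fun _ => affineIndependent_of_subsingleton ℝ _) fun a s has hmax ih hs => ?_
  rw [coe_insert] at hs
  refine affineIndependent_insert (ih (hs.mono (Set.subset_insert _ _))) ?_
  rcases s.eq_empty_or_nonempty with rfl | hne
  · simp [AffineSubspace.notMem_bot]
  obtain ⟨b, hb, hbmax⟩ := s.exists_max_image (fun p => #(supp p)) hne
  have hba := hs.extends_of_card_supp_le (.inr hb) (.inl rfl) (hmax b hb)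
  obtain ⟨i, hai, hbi⟩ := hba.exists_gap (ne_of_mem_of_not_mem hb has)
  refine notMem_affineSpan_of_coord_eq_zero (fun x hx => ?_) hai
  by_contra hxi
  have hxb := hs.extends_of_card_supp_le (.inr hx) (.inr hb) (hbmax x hx)
  exact hxi (hxb i hxi ▸ hbi)

end Chain

section RealFunctions

lemma monotone_sign : Monotone Real.sign := by
  intro a b hab
  rcases lt_trichotomy a 0 with ha | rfl | ha <;> rcases lt_trichotomy b 0 with hb | rfl | hb <;>
    simp [Real.sign_of_pos, Real.sign_of_neg, *] <;> linarith

lemma sign_mem_Icc (s : ℝ) : Real.sign s ∈ Set.Icc (-1) 1 := by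
  rcases Real.sign_apply_eq s with h | h | h <;> simp [h]

/-- Soft thresholding at level `t`, rescaled so that it maps `[-1, 1]` onto itself. -/
def shrink (t s : ℝ) : ℝ := (max (s - t) 0 - max (-s - t) 0) / (1 - t)

lemma monotone_shrink {t : ℝ} (ht : t < 1) : Monotone (shrink t) := by
  intro a b hab
  have h1 := max_le_max_right 0 (by linarith : a - t ≤ b - t)
  have h2 := max_le_max_right 0 (by linarith : -b - t ≤ -a - t)
  exact div_le_div_of_nonneg_right (by linarith) (by linarith)

lemma odd_shrink (t : ℝ) : Function.Odd (shrink t) := fun s => by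
  rw [shrink, shrink, neg_neg, ← neg_div, neg_sub]

lemma mapsTo_shrink {t : ℝ} (ht : t < 1) :
    Set.MapsTo (shrink t) (Set.Icc (-1) 1) (Set.Icc (-1) 1) := fun s ⟨hs1, hs2⟩ => by
  have h1t : 0 < 1 - t := by linarith
  rw [Set.mem_Icc, shrink, le_div_iff₀ h1t, div_le_iff₀ h1t]
  constructor <;> linarith [max_le (by linarith : s - t ≤ 1 - t) h1t.le,
    max_le (by linarith : -s - t ≤ 1 - t) h1t.le, le_max_right (s - t) 0, le_max_right (-s - t) 0]

lemma sign_add_shrink {t s : ℝ} (ht0 : 0 ≤ t) (ht1 : t < 1) (hs : s = 0 ∨ t ≤ |s|) :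
    t * Real.sign s + (1 - t) * shrink t s = s := by
  rw [shrink, mul_div_cancel₀ _ (by linarith : 1 - t ≠ 0)]
  rcases lt_trichotomy s 0 with h | rfl | h
  · have hst : s ≤ -t := by
      rcases hs with rfl | hs
      · exact absurd h (lt_irrefl 0)
      · rw [abs_of_neg h] at hs; linarith
    rw [Real.sign_of_neg h, max_eq_right (by linarith), max_eq_left (by linarith)]
    ring
  · simp
  · have hst : t ≤ s := by
      rcases hs with rfl | hs
      · exact absurd h (lt_irrefl 0)
      · rwa [abs_of_pos h] at hs
    rw [Real.sign_of_pos h, max_eq_left (by linarith), max_eq_right (by linarith)]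
    ring

lemma exists_lt_one_le_abs {ι : Type*} [Finite ι] (x : ι → ℝ) :
    ∃ t, 0 < t ∧ t < 1 ∧ ∀ i, x i ≠ 0 → t ≤ |x i| := by
  have hev : ∀ᶠ t in nhdsWithin (0 : ℝ) (Set.Ioi 0),
      0 < t ∧ t < 1 ∧ ∀ i, x i ≠ 0 → t ≤ |x i| := by
    refine eventually_mem_nhdsWithin.and (nhdsWithin_le_nhds ((eventually_lt_nhds one_pos).and
      (Filter.eventually_all.2 fun i => ?_)))
    by_cases hi : x i = 0
    · simp [hi]
    · exact (eventually_le_nhds (abs_pos.2 hi)).mono fun t ht _ => ht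
  exact hev.exists

lemma eq_of_one_le_mul {u v : ℝ} (hu : u = 1 ∨ u = -1) (hv : |v| ≤ 1) (h : 1 ≤ u * v) :
    v = u := by
  rw [abs_le] at hv
  rcases hu with rfl | rfl <;> linarith

end RealFunctions

section FundamentalIntersection

variable {n d : ℕ} {S : Set (Set (E n))}

def mapCoords (f : ℝ → ℝ) (x : E n) : E n := WithLp.toLp 2 fun i => f (x i)

lemma convex_HsetD (i j : Fin n) (a b : ℝ) : Convex ℝ (HsetD n d i j a b) := by
  rintro x ⟨⟨hx, hx0⟩, hxab⟩ y ⟨⟨hy, hy0⟩, hyab⟩ s t hs ht hst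
  have happ (k : Fin n) : (s • x + t • y) k = s * x k + t * y k := rfl
  refine ⟨⟨fun k hk => ?_, fun k hk => ?_⟩, ?_⟩
  · obtain ⟨hx1, hx2⟩ := hx k hk
    obtain ⟨hy1, hy2⟩ := hy k hk
    rw [happ]
    constructor <;> nlinarith
  · rw [happ, hx0 k hk, hy0 k hk]; ring
  · rw [happ, happ]
    nlinarith [mul_le_mul_of_nonneg_left hxab hs, mul_le_mul_of_nonneg_left hyab ht]

lemma isClosed_HsetD (i j : Fin n) (a b : ℝ) : IsClosed (HsetD n d i j a b) := by
  have hcube : IsClosed (IcubeD n d) := by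
    simp only [IcubeD, Set.ofPred_and, Set.ofPred_forall]
    exact (isClosed_iInter fun k => isClosed_iInter fun _ =>
        isClosed_Icc.preimage (PiLp.continuous_apply 2 _ k)).inter
      (isClosed_iInter fun k => isClosed_iInter fun _ =>
        isClosed_eq (PiLp.continuous_apply 2 _ k) continuous_const)
  exact hcube.inter (isClosed_le (continuous_const.mul (PiLp.continuous_apply 2 _ j))
    (continuous_const.mul (PiLp.continuous_apply 2 _ i)))

lemma coord_lt_of_mem_IcubeD {x : E n} (hx : x ∈ IcubeD n d) {i : Fin n} (hi : x i ≠ 0) :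
    (i : ℕ) < d :=
  lt_of_not_ge fun h => hi (hx.2 i h)

lemma _root_.IsFundSubsetD.sInter_subset_IcubeD (hS : IsFundSubsetD n d S) (hn : 0 < n)
    (hd : 0 < d) : ⋂₀ S ⊆ IcubeD n d := by
  rcases (hS.2 ⟨0, hn⟩ ⟨0, hn⟩ hd hd le_rfl).1 with hm | hm <;> exact fun x hx => (hx _ hm).1

lemma _root_.IsFundSubsetD.isCompact_sInter (hS : IsFundSubsetD n d S) (hn : 0 < n) (hd : 0 < d) :
    IsCompact (⋂₀ S) := by
  have hbox := (isCompact_Icc (a := (-1 : Fin n → ℝ)) (b := 1)).image (PiLp.continuous_toLp 2 _)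
  refine hbox.of_isClosed_subset (isClosed_sInter fun H hH => ?_) fun x hx => ?_
  · obtain ⟨i, j, -, -, a, b, -, -, rfl⟩ := hS.1 hH
    exact isClosed_HsetD i j a b
  · have hx' := hS.sInter_subset_IcubeD hn hd hx
    have hbound (i : Fin n) : x i ∈ Set.Icc (-1) 1 := by
      by_cases hi : (i : ℕ) < d
      · exact hx'.1 i hi
      · rw [hx'.2 i (not_lt.1 hi)]
        norm_num
    exact ⟨WithLp.ofLp x, ⟨fun i => (hbound i).1, fun i => (hbound i).2⟩, rfl⟩

lemma _root_.IsFundSubsetD.convex_sInter (hS : IsFundSubsetD n d S) : Convex ℝ (⋂₀ S) :=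
  _root_.convex_sInter fun H hH => by
    obtain ⟨i, j, -, -, a, b, -, -, rfl⟩ := hS.1 hH
    exact convex_HsetD i j a b

lemma _root_.IsFundSubsetD.mem_or_neg_mem_s10 (hS : IsFundSubsetD n d S) {i j : Fin n}
    (hi : (i : ℕ) < d) (hj : (j : ℕ) < d) (hij : i ≤ j) {a b : ℝ} (ha : a = 1 ∨ a = -1)
    (hb : b = 1 ∨ b = -1) :
    HsetD n d i j a b ∈ S ∨ HsetD n d i j (-a) (-b) ∈ S := by
  have h := hS.2 i j hi hj hij
  rcases ha with rfl | rfl <;> rcases hb with rfl | rfl <;> (try simp only [neg_neg]) <;> tauto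

lemma _root_.IsFundSubsetD.comparable (hS : IsFundSubsetD n d S) {i j : Fin n} (hi : (i : ℕ) < d)
    (hj : (j : ℕ) < d) {a b : ℝ} (ha : a = 1 ∨ a = -1) (hb : b = 1 ∨ b = -1) :
    (∀ x ∈ ⋂₀ S, b * x j ≤ a * x i) ∨ (∀ x ∈ ⋂₀ S, a * x i ≤ b * x j) := by
  rcases le_total i j with hij | hji
  · rcases hS.mem_or_neg_mem_s10 hi hj hij ha hb with hm | hm
    · exact .inl fun x hx => (hx _ hm).2
    · exact .inr fun x hx => by linarith [(hx _ hm).2]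
  · rcases hS.mem_or_neg_mem_s10 hj hi hji hb ha with hm | hm
    · exact .inr fun x hx => (hx _ hm).2
    · exact .inl fun x hx => by linarith [(hx _ hm).2]

lemma mapCoords_mem_HsetD {f : ℝ → ℝ} (hf : Monotone f) (hodd : Function.Odd f)
    (hmaps : Set.MapsTo f (Set.Icc (-1) 1) (Set.Icc (-1) 1)) {i j : Fin n} {a b : ℝ}
    (ha : a = 1 ∨ a = -1) (hb : b = 1 ∨ b = -1) {x : E n} (hx : x ∈ HsetD n d i j a b) :
    mapCoords f x ∈ HsetD n d i j a b := by
  obtain ⟨⟨hcube, hzero⟩, hxab⟩ := hx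
  have hunit {c : ℝ} (hc : c = 1 ∨ c = -1) (u : ℝ) : c * f u = f (c * u) := by
    rcases hc with rfl | rfl
    · simp
    · simp [hodd.eq]
  refine ⟨⟨fun k hk => hmaps (hcube k hk), fun k hk => ?_⟩, ?_⟩
  · simp [mapCoords, hzero k hk, hodd.map_zero]
  · simp only [mapCoords, hunit ha, hunit hb]
    exact hf hxab

lemma mapCoords_mem_sInter (hS : S ⊆ HfamD n d) {f : ℝ → ℝ} (hf : Monotone f)
    (hodd : Function.Odd f) (hmaps : Set.MapsTo f (Set.Icc (-1) 1) (Set.Icc (-1) 1)) {x : E n}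
    (hx : x ∈ ⋂₀ S) : mapCoords f x ∈ ⋂₀ S := fun H hH => by
  obtain ⟨i, j, -, -, a, b, ha, hb, rfl⟩ := hS hH
  exact mapCoords_mem_HsetD hf hodd hmaps ha hb (hx _ hH)

lemma mapCoords_sign_mem_sInter (hS : S ⊆ HfamD n d) {x : E n} (hx : x ∈ ⋂₀ S) :
    mapCoords Real.sign x ∈ ⋂₀ S :=
  mapCoords_mem_sInter hS monotone_sign (fun _ => Real.sign_neg) (fun s _ => sign_mem_Icc s) hx

lemma mapCoords_sign_eq_of_mem_extremePoints (hS : S ⊆ HfamD n d) {x : E n}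
    (hx : x ∈ (⋂₀ S).extremePoints ℝ) : mapCoords Real.sign x = x := by
  obtain ⟨t, ht0, ht1, hle⟩ := exists_lt_one_le_abs (fun i => x i)
  have hsign := mapCoords_sign_mem_sInter hS hx.1
  have hshrink := mapCoords_mem_sInter hS (monotone_shrink ht1) (odd_shrink t)
    (mapsTo_shrink ht1) hx.1
  have hseg : x ∈ openSegment ℝ (mapCoords Real.sign x) (mapCoords (shrink t) x) :=
    ⟨t, 1 - t, ht0, by linarith, by ring, PiLp.ext fun i =>
      sign_add_shrink ht0.le ht1 ((em (x i = 0)).imp_right (hle i))⟩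
  exact hx.2 hsign hshrink hseg

lemma finite_image_mapCoords_sign (A : Set (E n)) : (mapCoords Real.sign '' A).Finite := by
  refine ((Set.Finite.pi (t := fun _ : Fin n => ({-1, 0, 1} : Set ℝ)) fun _ =>
    Set.toFinite _).preimage (WithLp.ofLp_injective 2).injOn).subset ?_
  rintro _ ⟨x, -, rfl⟩ i -
  rcases Real.sign_apply_eq (x i) with h | h | h <;> simp [mapCoords, h]

lemma isChain_extends_image_sign (hS : IsFundSubsetD n d S) (hn : 0 < n) (hd : 0 < d) :
    IsChain Extends (mapCoords Real.sign '' ⋂₀ S) := by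
  rintro _ ⟨x, hx, rfl⟩ _ ⟨y, hy, rfl⟩ -
  set p := mapCoords Real.sign x
  set q := mapCoords Real.sign y
  have hp : p ∈ ⋂₀ S := mapCoords_sign_mem_sInter hS.1 hx
  have hq : q ∈ ⋂₀ S := mapCoords_sign_mem_sInter hS.1 hy
  have hunit {z : E n} (k : Fin n) (hk : mapCoords Real.sign z k ≠ 0) :
      mapCoords Real.sign z k = 1 ∨ mapCoords Real.sign z k = -1 := by
    rcases Real.sign_apply_eq (z k) with h | h | h <;> simp_all [mapCoords]
  have habs (z : E n) (k : Fin n) : |mapCoords Real.sign z k| ≤ 1 :=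
    abs_le.2 (sign_mem_Icc (z k))
  by_contra! hnot
  simp only [Extends, not_forall] at hnot
  obtain ⟨⟨i, hpi, hqi⟩, ⟨j, hqj, hpj⟩⟩ := hnot
  have hcube := hS.sInter_subset_IcubeD hn hd
  rcases hS.comparable (coord_lt_of_mem_IcubeD (hcube hp) hpi)
    (coord_lt_of_mem_IcubeD (hcube hq) hqj) (hunit i hpi) (hunit j hqj) with h | h
  · refine hqi (eq_of_one_le_mul (hunit i hpi) (habs y i) ?_)
    have := h q hq
    rcases hunit j hqj with h1 | h1 <;> rw [h1] at this <;> linarith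
  · refine hpj (eq_of_one_le_mul (hunit j hqj) (habs x j) ?_)
    have := h p hp
    rcases hunit i hpi with h1 | h1 <;> rw [h1] at this <;> linarith

lemma sInter_eq_convexHull (hS : IsFundSubsetD n d S) (hn : 0 < n) (hd : 0 < d) :
    ⋂₀ S = convexHull ℝ (mapCoords Real.sign '' ⋂₀ S) := by
  have hsub : mapCoords Real.sign '' ⋂₀ S ⊆ ⋂₀ S :=
    Set.image_subset_iff.2 fun _ => mapCoords_sign_mem_sInter hS.1
  have hclosed : IsClosed (convexHull ℝ (mapCoords Real.sign '' ⋂₀ S)) :=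
    ((finite_image_mapCoords_sign _).isCompact_convexHull (𝕜 := ℝ)).isClosed
  refine (convexHull_min hsub hS.convex_sInter).antisymm' ?_
  calc ⋂₀ S = closure (convexHull ℝ ((⋂₀ S).extremePoints ℝ)) :=
        (closure_convexHull_extremePoints (hS.isCompact_sInter hn hd) hS.convex_sInter).symm
    _ ⊆ convexHull ℝ (mapCoords Real.sign '' ⋂₀ S) := closure_minimal (convexHull_mono
        fun x hx => ⟨x, hx.1, mapCoords_sign_eq_of_mem_extremePoints hS.1 hx⟩) hclosed

lemma isSimplex_sInter (hS : IsFundSubsetD n d S) (hn : 0 < n) (hd : 0 < d) :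
    IsSimplex (⋂₀ S) := by
  have hfin := finite_image_mapCoords_sign (⋂₀ S)
  have hchain := isChain_extends_image_sign hS hn hd
  rw [← hfin.coe_toFinset] at hchain
  rw [sInter_eq_convexHull hS hn hd, ← hfin.coe_toFinset]
  exact ⟨hfin.toFinset, hchain.affineIndependent, rfl⟩

end FundamentalIntersection

lemma _root_.IsFaceD.exists_eq_singleton {n d : ℕ} {c : Set (E n)} (h : IsFaceD n d c 0) :
    ∃ p, c = {p} := by
  obtain ⟨J, hJ, hJ0, hcard, rfl⟩ := h
  have hnone : {i | J i = Set.Icc (-1 : ℝ) 1} = ∅ := (Set.ncard_eq_zero (Set.toFinite _)).1 hcard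
  have hsingle (i : Fin n) : ∃ v, J i = {v} := by
    by_cases hi : (i : ℕ) < d
    · rcases hJ i hi with h | h | h
      · exact absurd (hnone ▸ h : i ∈ (∅ : Set (Fin n))) (Set.notMem_empty i)
      · exact ⟨_, h⟩
      · exact ⟨_, h⟩
    · exact ⟨0, hJ0 i (not_lt.1 hi)⟩
  choose v hv using hsingle
  refine ⟨WithLp.toLp 2 v, Set.ext fun x => ?_⟩
  simp only [hv, Set.mem_singleton_iff]
  exact ⟨fun h => PiLp.ext h, fun h i => h ▸ rfl⟩

lemma _root_.ConfAffine.exists_affineEquiv {n : ℕ} {L : E n → E n} (hL : ConfAffine n L) :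
    ∃ A : E n ≃ᵃ[ℝ] E n, ⇑A = L := by
  obtain ⟨c, U, v, hc, hLdef⟩ := hL
  refine ⟨(U.toLinearEquiv.trans
      (LinearEquiv.smulOfNeZero ℝ (E n) c hc.ne')).toAffineEquiv.trans
      (AffineEquiv.constVAdd ℝ (E n) v), funext fun x => ?_⟩
  rw [hLdef x]
  exact add_comm _ _

end CubeSimplex

/-- Every element of `K_n` is a simplex, i.e. the convex hull of a finite affinely
independent set of points. -/
theorem stmt10 (n : ℕ) (hn : 1 ≤ n) (K : Set (E n)) (hK : K ∈ Kcal n) :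
    ∃ s : Finset (E n),
      AffineIndependent ℝ (Subtype.val : {x : E n // x ∈ s} → E n) ∧
      K = convexHull ℝ (s : Set (E n)) := by
  obtain ⟨c, e, hface, ⟨rfl, rfl⟩ | ⟨he, L, hL, -, H, ⟨S, hS, rfl⟩, rfl⟩⟩ := hK
  · obtain ⟨p, rfl⟩ := hface.exists_eq_singleton
    exact CubeSimplex.isSimplex_singleton p
  · obtain ⟨A, rfl⟩ := hL.exists_affineEquiv
    exact (CubeSimplex.isSimplex_sInter hS hn he).preimage A
end
end
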